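/- arXiv:2307.05819 — 6 statements merged into one kernel-verified Lean document; each statement's English description precedes it below -/
import Mathlib

section
/- A function φ : ℝ^d → ℝ belongs to ABV(ℝ^d) if and only if there exist functions φ₁, φ₂ : ℝ^d → ℝ, each increasing with respect to the coordinatewise order, such that φ = φ₁ − φ₂. -/
open Set

/-- A curve `γ : [0,1] → ℝ^d` whose coordinates are each monotone nondecreasing on `[0,1]`
and take values in the box `∏ [a i, b i]`. -/
def CoordMonotoneCurveInto {d : ℕ} (γ : ℝ → (Fin d → ℝ)) (a b : Fin d → ℝ) : Prop :=
  (∀ i, MonotoneOn (fun t => γ t i) (Set.Icc (0 : ℝ) 1)) ∧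
  (∀ t ∈ Set.Icc (0 : ℝ) 1, ∀ i, γ t i ∈ Set.Icc (a i) (b i))

/-- `φ ∈ ABV(ℝ^d)`: for every closed box `Q = ∏ [a i, b i]`, the supremum over all
coordinatewise monotone curves `γ : [0,1] → Q` of the total variation of `φ ∘ γ` on
`[0,1]` is finite. -/
def MemABV {d : ℕ} (φ : (Fin d → ℝ) → ℝ) : Prop :=
  ∀ a b : Fin d → ℝ, a ≤ b →
    (⨆ γ : {γ : ℝ → (Fin d → ℝ) // CoordMonotoneCurveInto γ a b},
      eVariationOn (φ ∘ γ.1) (Set.Icc (0 : ℝ) 1)) < ⊤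

/-!
Along monotone chains `p = u 0 ≤ ⋯ ≤ u n = q` the sums `∑ |φ (u (k+1)) - φ (u k)|` are bounded by
the ABV bound of the box `[p, q]`, since a step curve traverses the chain. Their supremum is
superadditive: appending a point `r ≥ q` to a chain ending at `q` adds `|φ r - φ q|`. Taking a
supremum over `N` of the variation from the corner `-N` to `x`, normalised by the variation over
the cube `[-N, N]^d`, gives a real function `V` with `V x + |φ y - φ x| ≤ V y` whenever `x ≤ y`,
so `φ = V - (V - φ)` with both terms increasing. Conversely, an increasing function varies along a
monotone curve in `[a, b]` by at most its increment from `a` to `b`.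
-/

open scoped ENNReal

section ChainVariation

variable {α E : Type*} [Preorder α] [PseudoEMetricSpace E]

noncomputable def chainVariation (φ : α → E) (p q : α) : ℝ≥0∞ :=
  sSup {s | ∃ (n : ℕ) (u : ℕ → α), Monotone u ∧ u 0 = p ∧ u n = q ∧
    ∑ k ∈ Finset.range n, edist (φ (u (k + 1))) (φ (u k)) = s}

lemma sum_edist_le_chainVariation (φ : α → E) {n : ℕ} {u : ℕ → α} (hu : Monotone u) :
    ∑ k ∈ Finset.range n, edist (φ (u (k + 1))) (φ (u k)) ≤ chainVariation φ (u 0) (u n) :=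
  le_sSup ⟨n, u, hu, rfl, rfl, rfl⟩

lemma chainVariation_add_edist_le (φ : α → E) {p q r : α} (hpq : p ≤ q) (hqr : q ≤ r) :
    chainVariation φ p q + edist (φ r) (φ q) ≤ chainVariation φ p r := by
  have hne : {s | ∃ (n : ℕ) (u : ℕ → α), Monotone u ∧ u 0 = p ∧ u n = q ∧
      ∑ k ∈ Finset.range n, edist (φ (u (k + 1))) (φ (u k)) = s}.Nonempty :=
    ⟨_, 1, fun k => if k = 0 then p else q, fun j k hjk => by
      dsimp only
      split_ifs <;> first | exact le_rfl | exact hpq | omega, rfl, rfl, rfl⟩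
  rw [chainVariation, ENNReal.sSup_add hne]
  refine iSup₂_le ?_
  rintro _ ⟨n, u, hu, rfl, rfl, rfl⟩
  set v : ℕ → α := fun k => if k ≤ n then u k else r
  have hv : Monotone v := by
    intro j k hjk
    simp only [v]
    split_ifs
    · exact hu hjk
    · exact (hu (by omega)).trans hqr
    · omega
    · exact le_rfl
  calc ∑ k ∈ Finset.range n, edist (φ (u (k + 1))) (φ (u k)) + edist (φ r) (φ (u n))
      = ∑ k ∈ Finset.range (n + 1), edist (φ (v (k + 1))) (φ (v k)) := by
        rw [Finset.sum_range_succ]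
        congr 1
        · refine Finset.sum_congr rfl fun k hk => ?_
          have hk := Finset.mem_range.mp hk
          simp only [v, if_pos hk.le, if_pos (Nat.succ_le_of_lt hk)]
        · simp [v]
    _ ≤ chainVariation φ (v 0) (v (n + 1)) := sum_edist_le_chainVariation φ hv
    _ = chainVariation φ (u 0) r := by simp [v]

lemma toReal_chainVariation_add_abs_sub_le (φ : α → ℝ) {p q r : α} (hpq : p ≤ q) (hqr : q ≤ r)
    (hfin : chainVariation φ p r ≠ ∞) :
    (chainVariation φ p q).toReal + |φ r - φ q| ≤ (chainVariation φ p r).toReal := by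
  have hle := chainVariation_add_edist_le φ hpq hqr
  have hpq_fin : chainVariation φ p q ≠ ∞ := ne_top_of_le_ne_top hfin (le_of_add_le_left hle)
  calc (chainVariation φ p q).toReal + |φ r - φ q|
      = (chainVariation φ p q + edist (φ r) (φ q)).toReal := by
        rw [ENNReal.toReal_add hpq_fin (edist_ne_top _ _), edist_dist, Real.dist_eq,
          ENNReal.toReal_ofReal (abs_nonneg _)]
    _ ≤ (chainVariation φ p r).toReal := ENNReal.toReal_mono hfin hle

end ChainVariation

section VariationFunction

variable {ι : Type*} {φ : (ι → ℝ) → ℝ}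

/-- Normalising the variation from the corner `-N` by the variation over the whole cube
`[-N, N]^ι` makes these values bounded above in `N`, so their supremum is a real number. -/
noncomputable def cornerVariation (φ : (ι → ℝ) → ℝ) (N : ℕ) (x : ι → ℝ) : ℝ :=
  (chainVariation φ (-N) x).toReal - (chainVariation φ (-N) N).toReal

noncomputable def variationFunction (φ : (ι → ℝ) → ℝ) (x : ι → ℝ) : ℝ :=
  sSup ((cornerVariation φ · x) '' {N | -(N : ι → ℝ) ≤ x})

lemma exists_nat_cube_mem [Finite ι] (x : ι → ℝ) :
    ∃ M : ℕ, ∀ N : ℕ, M ≤ N → -(N : ι → ℝ) ≤ x ∧ x ≤ N := by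
  obtain ⟨M, hM⟩ := exists_nat_ge (⨆ i, |x i|)
  refine ⟨M, fun N hN => ?_⟩
  have hxN : ∀ i, |x i| ≤ N :=
    fun i => (le_ciSup (Finite.bddAbove_range _) i).trans (hM.trans (by exact_mod_cast hN))
  exact ⟨fun i => by simpa using neg_le_of_abs_le (hxN i),
    fun i => by simpa using le_of_abs_le (hxN i)⟩

variable (hφ : ∀ p q, p ≤ q → chainVariation φ p q ≠ ∞)
include hφ

lemma cornerVariation_add_abs_sub_le {N : ℕ} {x y : ι → ℝ} (hN : -(N : ι → ℝ) ≤ x)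
    (hxy : x ≤ y) : cornerVariation φ N x + |φ y - φ x| ≤ cornerVariation φ N y := by
  have := toReal_chainVariation_add_abs_sub_le φ hN hxy (hφ _ _ (hN.trans hxy))
  unfold cornerVariation
  linarith

lemma bddAbove_cornerVariation_image [Finite ι] (x : ι → ℝ) :
    BddAbove ((cornerVariation φ · x) '' {N | -(N : ι → ℝ) ≤ x}) := by
  obtain ⟨M, hM⟩ := exists_nat_cube_mem x
  refine (((Set.finite_Iio M).image (cornerVariation φ · x)).bddAbove.union
    (bddAbove_Iic (a := 0))).mono ?_
  rintro _ ⟨N, hN, rfl⟩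
  rcases lt_or_ge N M with hNM | hMN
  · exact Or.inl ⟨N, hNM, rfl⟩
  · have hcube := cornerVariation_add_abs_sub_le hφ hN (hM N hMN).2
    have hNN : cornerVariation φ N N = 0 := sub_self _
    exact Or.inr (show cornerVariation φ N x ≤ 0 by linarith [abs_nonneg (φ N - φ x)])

lemma variationFunction_add_abs_sub_le [Finite ι] {x y : ι → ℝ} (hxy : x ≤ y) :
    variationFunction φ x + |φ y - φ x| ≤ variationFunction φ y := by
  obtain ⟨M, hM⟩ := exists_nat_cube_mem x
  have hne : {N : ℕ | -(N : ι → ℝ) ≤ x}.Nonempty := ⟨M, (hM M le_rfl).1⟩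
  refine le_sub_iff_add_le.mp (csSup_le (hne.image _) ?_)
  rintro _ ⟨N, hN, rfl⟩
  exact le_sub_iff_add_le.mpr ((cornerVariation_add_abs_sub_le hφ hN hxy).trans
    (le_csSup (bddAbove_cornerVariation_image hφ y) ⟨N, hN.trans hxy, rfl⟩))

lemma monotone_variationFunction [Finite ι] : Monotone (variationFunction φ) := fun _ _ hxy =>
  le_of_add_le_of_nonneg_left (variationFunction_add_abs_sub_le hφ hxy) (abs_nonneg _)

lemma monotone_variationFunction_sub [Finite ι] : Monotone (variationFunction φ - φ) :=
  fun x y hxy => by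
    have := variationFunction_add_abs_sub_le hφ hxy
    have := le_abs_self (φ y - φ x)
    simp only [Pi.sub_apply]
    linarith

end VariationFunction

lemma eVariationOn_sub_le {α E : Type*} [LinearOrder α] [SeminormedAddCommGroup E]
    (f g : α → E) (s : Set α) :
    eVariationOn (f - g) s ≤ eVariationOn f s + eVariationOn g s := by
  refine iSup_le fun ⟨n, u, hu, hus⟩ => ?_
  calc ∑ i ∈ Finset.range n, edist ((f - g) (u (i + 1))) ((f - g) (u i))
      ≤ ∑ i ∈ Finset.range n,
          (edist (f (u (i + 1))) (f (u i)) + edist (g (u (i + 1))) (g (u i))) := by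
        gcongr with i
        rw [Pi.sub_apply, Pi.sub_apply, sub_eq_add_neg, sub_eq_add_neg, ← edist_neg_neg (g _)]
        exact edist_add_add_le _ _ _ _
    _ ≤ eVariationOn f s + eVariationOn g s := by
        rw [Finset.sum_add_distrib]
        exact add_le_add (eVariationOn.sum_le hu hus) (eVariationOn.sum_le hu hus)

section BoxVariation

variable {d : ℕ}

noncomputable def boxVariation (φ : (Fin d → ℝ) → ℝ) (a b : Fin d → ℝ) : ℝ≥0∞ :=
  ⨆ γ : {γ : ℝ → (Fin d → ℝ) // CoordMonotoneCurveInto γ a b},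
    eVariationOn (φ ∘ γ.1) (Set.Icc (0 : ℝ) 1)

/-- A monotone chain `u 0 ≤ ⋯ ≤ u n` is traversed by the step curve `t ↦ u ⌊t n⌋₊`. -/
lemma chainVariation_le_boxVariation (φ : (Fin d → ℝ) → ℝ) (p q : Fin d → ℝ) :
    chainVariation φ p q ≤ boxVariation φ p q := by
  refine sSup_le ?_
  rintro _ ⟨n, u, hu, rfl, rfl, rfl⟩
  rcases n.eq_zero_or_pos with rfl | hn
  · simp
  have hn' : (0 : ℝ) < n := Nat.cast_pos.mpr hn
  set γ : ℝ → (Fin d → ℝ) := fun t => u ⌊t * n⌋₊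
  have hγ : CoordMonotoneCurveInto γ (u 0) (u n) := by
    refine ⟨fun i s _ t _ hst => hu (Nat.floor_mono (by gcongr)) i, fun t ht i => ⟨?_, ?_⟩⟩
    · exact hu (Nat.zero_le _) i
    · exact hu (Nat.floor_le_of_le (mul_le_of_le_one_left hn'.le ht.2)) i
  have hγ_nat : ∀ k : ℕ, γ (k / n) = u k := fun k => by
    simp only [γ, div_mul_cancel₀ _ hn'.ne', Nat.floor_natCast]
  calc ∑ k ∈ Finset.range n, edist (φ (u (k + 1))) (φ (u k))
      = ∑ k ∈ Finset.range n, edist ((φ ∘ γ) ((k + 1 : ℕ) / n)) ((φ ∘ γ) (k / n)) := by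
        simp only [Function.comp_apply, hγ_nat]
    _ ≤ eVariationOn (φ ∘ γ) (Set.Icc 0 1) := by
        refine eVariationOn.sum_le_of_monotoneOn_Iic (u := fun k : ℕ => (k : ℝ) / n)
          (fun j _ k _ hjk => by dsimp only; gcongr) fun k hk => ⟨by positivity, ?_⟩
        rw [div_le_one hn']
        exact_mod_cast hk
    _ ≤ boxVariation φ (u 0) (u n) := le_iSup_of_le ⟨γ, hγ⟩ le_rfl

lemma boxVariation_le_of_monotone {ψ : (Fin d → ℝ) → ℝ} (hψ : Monotone ψ) (a b : Fin d → ℝ) :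
    boxVariation ψ a b ≤ ENNReal.ofReal (ψ b - ψ a) := by
  refine iSup_le fun ⟨γ, hγ_mono, hγ_mem⟩ => ?_
  have hψγ : MonotoneOn (ψ ∘ γ) (Set.Icc 0 1) :=
    fun s hs t ht hst => hψ fun i => hγ_mono i hs ht hst
  have h0 : (0 : ℝ) ∈ Set.Icc (0 : ℝ) 1 := ⟨le_rfl, zero_le_one⟩
  have h1 : (1 : ℝ) ∈ Set.Icc (0 : ℝ) 1 := ⟨zero_le_one, le_rfl⟩
  calc eVariationOn (ψ ∘ γ) (Set.Icc 0 1)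
      = ENNReal.ofReal (ψ (γ 1) - ψ (γ 0)) := by
        simpa using hψγ.eVariationOn_eq h0 h1
    _ ≤ ENNReal.ofReal (ψ b - ψ a) := by
        gcongr
        exacts [hψ fun i => (hγ_mem 1 h1 i).2, hψ fun i => (hγ_mem 0 h0 i).1]

lemma boxVariation_sub_le (φ ψ : (Fin d → ℝ) → ℝ) (a b : Fin d → ℝ) :
    boxVariation (φ - ψ) a b ≤ boxVariation φ a b + boxVariation ψ a b :=
  iSup_le fun γ => (eVariationOn_sub_le (φ ∘ γ.1) (ψ ∘ γ.1) _).trans <|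
    add_le_add (le_iSup_of_le γ le_rfl) (le_iSup_of_le γ le_rfl)

end BoxVariation

/-- `φ : ℝ^d → ℝ` belongs to `ABV(ℝ^d)` if and only if it is the difference
of two functions that are increasing with respect to the coordinatewise order. -/
theorem stmt1 {d : ℕ} (φ : (Fin d → ℝ) → ℝ) :
    MemABV φ ↔ ∃ φ₁ φ₂ : (Fin d → ℝ) → ℝ,
      Monotone φ₁ ∧ Monotone φ₂ ∧ φ = φ₁ - φ₂ := by
  constructor
  · intro hφ
    have hfin : ∀ p q, p ≤ q → chainVariation φ p q ≠ ∞ := fun p q hpq =>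
      ((chainVariation_le_boxVariation φ p q).trans_lt (hφ p q hpq)).ne
    exact ⟨variationFunction φ, variationFunction φ - φ, monotone_variationFunction hfin,
      monotone_variationFunction_sub hfin, (sub_sub_cancel _ _).symm⟩
  · rintro ⟨φ₁, φ₂, h₁, h₂, rfl⟩ a b -
    calc boxVariation (φ₁ - φ₂) a b
        ≤ ENNReal.ofReal (φ₁ b - φ₁ a) + ENNReal.ofReal (φ₂ b - φ₂ a) :=
          (boxVariation_sub_le φ₁ φ₂ a b).trans <|
            add_le_add (boxVariation_le_of_monotone h₁ a b) (boxVariation_le_of_monotone h₂ a b)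
      _ < ∞ := ENNReal.add_lt_top.mpr ⟨ENNReal.ofReal_lt_top, ENNReal.ofReal_lt_top⟩
end

section
/- If φ : ℝ^d → ℝ can be written as φ = φ₁ − φ₂ where φ₁, φ₂ : ℝ^d → ℝ are increasing with respect to the coordinatewise order, then φ is continuous at Lebesgue-almost every point of ℝ^d and is (Fréchet) differentiable at Lebesgue-almost every point of ℝ^d. -/
/-!
A difference of continuous (resp. differentiable) functions is continuous (resp. differentiable),
so it suffices to treat a single increasing `f : ℝ^d → ℝ`.

Continuity: the sublevel sets `{f < q}` are lower sets, whose frontiers are Lebesgue-null, and `f`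
is continuous at every point lying on none of the countably many frontiers with `q` rational.

Differentiability (Minty's trick): the map `Φ = minty f`, `Φ x = x + f x • (1, …, 1)`, satisfies
`|f x - f y| ≤ ‖Φ x - Φ y‖`, because `Φ x - Φ y` has all coordinates below `f x - f y` only if
`x < y`. Hence `‖x - y‖ ≤ 2 ‖Φ x - Φ y‖`, and `Φ` has a `2`-Lipschitz left inverse `Ψ` on `ℝ^d`.
By Rademacher's theorem, the Lipschitz image of null sets and Sard's lemma for Lipschitz maps,
for almost every `x` the map `Ψ` is differentiable at `Φ x` with invertible derivative; where
moreover `f` is continuous at `x`, the inverse function argument makes `Φ`, hence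
`f = Φ₀ - x₀`, differentiable at `x`.
-/

open MeasureTheory Set Function Filter
open scoped NNReal Topology

theorem continuousAt_of_forall_rat_notMem_frontier {X : Type*} [TopologicalSpace X]
    {f : X → ℝ} {x : X} (h : ∀ q : ℚ, x ∉ frontier {y | f y < q}) : ContinuousAt f x := by
  refine tendsto_order.2 ⟨fun a ha => ?_, fun b hb => ?_⟩
  · obtain ⟨p, hap, hpx⟩ := exists_rat_btwn ha
    have hx : x ∉ closure {y | f y < p} := fun hcl =>
      h p ⟨hcl, fun hint => (interior_subset (s := {y | f y < p}) hint).not_ge hpx.le⟩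
    filter_upwards [isClosed_closure.isOpen_compl.mem_nhds hx] with y hy
    exact hap.trans_le (not_lt.1 fun hyp => hy (subset_closure hyp))
  · obtain ⟨q, hxq, hqb⟩ := exists_rat_btwn hb
    have hx : x ∈ interior {y | f y < q} := (mem_interior_iff_notMem_frontier (s := {y | f y < q}) hxq).2 (h q)
    filter_upwards [mem_interior_iff_mem_nhds.1 hx] with y hy
    exact hy.trans hqb

section Monotone

variable {ι : Type*} [Fintype ι]

theorem Monotone.ae_continuousAt {f : (ι → ℝ) → ℝ} (hf : Monotone f) :
    ∀ᵐ x, ContinuousAt f x := by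
  have hnull : ∀ q : ℚ, ∀ᵐ x, x ∉ frontier {y | f y < q} := fun q =>
    measure_eq_zero_iff_ae_notMem.1
      (IsLowerSet.null_frontier fun _ _ hba ha => (hf hba).trans_lt ha)
  filter_upwards [ae_all_iff.2 hnull] with x hx
  exact continuousAt_of_forall_rat_notMem_frontier hx

def minty (f : (ι → ℝ) → ℝ) (x : ι → ℝ) : ι → ℝ := fun i => x i + f x

theorem Monotone.abs_sub_le_dist_minty {f : (ι → ℝ) → ℝ} (hf : Monotone f) (x y : ι → ℝ) :
    |f x - f y| ≤ dist (minty f x) (minty f y) := by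
  have key : ∀ x y, f x - f y ≤ dist (minty f x) (minty f y) := by
    intro x y
    by_contra! hlt
    have hxy : x ≤ y := fun i => by
      have hi := dist_le_pi_dist (minty f x) (minty f y) i
      rw [Real.dist_eq] at hi
      have := (le_abs_self _).trans hi
      simp only [minty] at this
      linarith
    linarith [hf hxy, dist_nonneg (x := minty f x) (y := minty f y)]
  exact abs_sub_le_iff.2 ⟨key x y, dist_comm (minty f x) _ ▸ key y x⟩

theorem Monotone.dist_le_two_mul_dist_minty {f : (ι → ℝ) → ℝ} (hf : Monotone f)
    (x y : ι → ℝ) : dist x y ≤ (2 : ℝ≥0) * dist (minty f x) (minty f y) := by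
  refine (dist_pi_le_iff (by positivity)).2 fun i => ?_
  have hi := dist_le_pi_dist (minty f x) (minty f y) i
  have hfxy := hf.abs_sub_le_dist_minty x y
  rw [Real.dist_eq] at hi ⊢
  calc |x i - y i| = |(minty f x i - minty f y i) - (f x - f y)| := by
        simp only [minty]; ring_nf
    _ ≤ |minty f x i - minty f y i| + |f x - f y| := abs_sub _ _
    _ ≤ (2 : ℝ≥0) * dist (minty f x) (minty f y) := by push_cast; linarith

end Monotone

section Lipschitz

variable {ι : Type*} [Fintype ι]

theorem exists_lipschitzWith_leftInverse {X : Type*} [PseudoMetricSpace X]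
    {g : (ι → ℝ) → X} {K : ℝ≥0} (hg : ∀ x y, dist x y ≤ K * dist (g x) (g y)) :
    ∃ Ψ : X → ι → ℝ, LipschitzWith K Ψ ∧ LeftInverse Ψ g := by
  have hinj : Injective g := fun x y h => dist_le_zero.1 (by simpa [h] using hg x y)
  have hlip : LipschitzOnWith K (invFun g) (range g) := by
    refine LipschitzOnWith.of_dist_le_mul ?_
    rintro _ ⟨x, rfl⟩ _ ⟨y, rfl⟩
    simpa only [leftInverse_invFun hinj _] using hg x y
  obtain ⟨Ψ, hΨ, heq⟩ := hlip.extend_pi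
  exact ⟨Ψ, hΨ, fun x => (heq (mem_range_self x)).symm.trans (leftInverse_invFun hinj x)⟩

theorem LipschitzOnWith.volume_image_null {Ψ : (ι → ℝ) → ι → ℝ} {K : ℝ≥0} {s : Set (ι → ℝ)}
    (hΨ : LipschitzOnWith K Ψ s) (hs : volume s = 0) : volume (Ψ '' s) = 0 := by
  simpa [hs] using hΨ.hausdorffMeasure_image_le (Nat.cast_nonneg (Fintype.card ι))

theorem DifferentiableAt.of_local_left_inverse {𝕜 E : Type*} [NontriviallyNormedField 𝕜]
    [CompleteSpace 𝕜] [NormedAddCommGroup E] [NormedSpace 𝕜 E] [FiniteDimensional 𝕜 E]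
    {Ψ Φ : E → E} {x : E} (hΨ : DifferentiableAt 𝕜 Ψ (Φ x)) (hdet : (fderiv 𝕜 Ψ (Φ x)).det ≠ 0)
    (hΦ : ContinuousAt Φ x) (hinv : ∀ᶠ y in 𝓝 x, Ψ (Φ y) = y) : DifferentiableAt 𝕜 Φ x := by
  have hΨ' : HasFDerivAt Ψ ((fderiv 𝕜 Ψ (Φ x)).toContinuousLinearEquivOfDetNeZero hdet : E →L[𝕜] E)
      (Φ x) := by
    rw [ContinuousLinearMap.coe_toContinuousLinearEquivOfDetNeZero]
    exact hΨ.hasFDerivAt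
  exact (hΨ'.of_local_left_inverse hΦ hinv).differentiableAt

theorem LipschitzWith.ae_differentiableAt_of_leftInverse {Ψ Φ : (ι → ℝ) → ι → ℝ} {K : ℝ≥0}
    (hΨ : LipschitzWith K Ψ) (hinv : LeftInverse Ψ Φ) :
    ∀ᵐ x, ContinuousAt Φ x → DifferentiableAt ℝ Φ x := by
  set N := {a | ¬DifferentiableAt ℝ Ψ a}
  set S := {a | DifferentiableAt ℝ Ψ a ∧ (fderiv ℝ Ψ a).det = 0}
  have hN : volume (Ψ '' N) = 0 :=
    hΨ.lipschitzOnWith.volume_image_null (ae_iff.1 hΨ.ae_differentiableAt)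
  have hS : volume (Ψ '' S) = 0 :=
    addHaar_image_eq_zero_of_det_fderivWithin_eq_zero volume
      (fun a ha => ha.1.hasFDerivAt.hasFDerivWithinAt) (fun a ha => ha.2)
  filter_upwards [measure_eq_zero_iff_ae_notMem.1 hN, measure_eq_zero_iff_ae_notMem.1 hS]
    with x hxN hxS hΦ
  have hdiff : DifferentiableAt ℝ Ψ (Φ x) := not_not.1 fun h => hxN ⟨Φ x, h, hinv x⟩
  exact hdiff.of_local_left_inverse (fun h => hxS ⟨Φ x, ⟨hdiff, h⟩, hinv x⟩) hΦ
    (Eventually.of_forall hinv)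

end Lipschitz

theorem Monotone.ae_differentiableAt_pi {ι : Type*} [Fintype ι] {f : (ι → ℝ) → ℝ}
    (hf : Monotone f) : ∀ᵐ x, DifferentiableAt ℝ f x := by
  rcases isEmpty_or_nonempty ι with hι | ⟨⟨i⟩⟩
  · exact ae_of_all _ fun x => (hasFDerivAt_of_subsingleton f x).differentiableAt
  obtain ⟨Ψ, hΨ, hinv⟩ := exists_lipschitzWith_leftInverse hf.dist_le_two_mul_dist_minty
  filter_upwards [hf.ae_continuousAt, hΨ.ae_differentiableAt_of_leftInverse hinv]
    with x hcont hdiff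
  have hminty : DifferentiableAt ℝ (minty f) x :=
    hdiff (continuousAt_pi.2 fun j => (continuousAt_apply j x).add hcont)
  have hf_eq : f = fun y => minty f y i - y i := funext fun y => by simp [minty]
  rw [hf_eq]
  exact ((differentiableAt_apply i _).comp x hminty).sub (differentiableAt_apply i x)

/-- If `φ : ℝ^d → ℝ` is the difference of two functions increasing with
respect to the coordinatewise order, then `φ` is continuous at Lebesgue-almost every
point of `ℝ^d` and (Fréchet) differentiable at Lebesgue-almost every point. -/
theorem stmt2 {d : ℕ} (φ φ₁ φ₂ : (Fin d → ℝ) → ℝ)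
    (h₁ : Monotone φ₁) (h₂ : Monotone φ₂) (hφ : φ = φ₁ - φ₂) :
    ∀ᵐ x : (Fin d → ℝ) ∂volume, ContinuousAt φ x ∧ DifferentiableAt ℝ φ x := by
  subst hφ
  filter_upwards [h₁.ae_continuousAt, h₁.ae_differentiableAt_pi, h₂.ae_continuousAt,
    h₂.ae_differentiableAt_pi] with x hc₁ hd₁ hc₂ hd₂
  exact ⟨hc₁.sub hc₂, hd₁.sub hd₂⟩
end

section
/- Let φ : ℝ^d → ℝ be increasing with respect to the coordinatewise order and locally bounded (hence Lebesgue measurable), and set φ^ε := ρ^ε * φ and φ_ε := ρ_ε * φ (convolutions over ℝ^d). Then: (a) φ^ε and φ_ε are increasing and satisfy φ_ε ≤ φ ≤ φ^ε pointwise; (b) if 0 < ε < δ then φ^ε ≤ φ^δ and φ_δ ≤ φ_ε pointwise, and for every x ∈ ℝ^d, φ^ε(x) → φ^*(x) and φ_ε(x) → φ_*(x) as ε ↓ 0; (c) for every ε > 0 and every x ∈ ℝ^d, φ^ε(x − 2ε𝟙) = φ_ε(x), where 𝟙 = (1,…,1). -/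
open Filter Topology MeasureTheory

/-- The one-sided mollifier `ρ^ε(z) = ε^{-d} ρ((z + ε𝟙)/ε)`, supported in `[-2ε,0]^d`. -/
noncomputable def mollUp {d : ℕ} (ρ : (Fin d → ℝ) → ℝ) (ε : ℝ) (z : Fin d → ℝ) : ℝ :=
  (ε ^ d)⁻¹ * ρ (ε⁻¹ • (z + ε • (1 : Fin d → ℝ)))

/-- The one-sided mollifier `ρ_ε(z) = ε^{-d} ρ((z - ε𝟙)/ε)`, supported in `[0,2ε]^d`. -/
noncomputable def mollDown {d : ℕ} (ρ : (Fin d → ℝ) → ℝ) (ε : ℝ) (z : Fin d → ℝ) : ℝ :=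
  (ε ^ d)⁻¹ * ρ (ε⁻¹ • (z - ε • (1 : Fin d → ℝ)))

/-- The one-sided regularization `φ^ε = ρ^ε * φ`. -/
noncomputable def convUp {d : ℕ} (ρ : (Fin d → ℝ) → ℝ) (ε : ℝ) (φ : (Fin d → ℝ) → ℝ)
    (x : Fin d → ℝ) : ℝ :=
  ∫ y : Fin d → ℝ, mollUp ρ ε (x - y) * φ y

/-- The one-sided regularization `φ_ε = ρ_ε * φ`. -/
noncomputable def convDown {d : ℕ} (ρ : (Fin d → ℝ) → ℝ) (ε : ℝ) (φ : (Fin d → ℝ) → ℝ)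
    (x : Fin d → ℝ) : ℝ :=
  ∫ y : Fin d → ℝ, mollDown ρ ε (x - y) * φ y

/-- Upper semicontinuous envelope `φ^*(x) = limsup_{y → x} φ(y)`. -/
noncomputable def uscEnv {d : ℕ} (φ : (Fin d → ℝ) → ℝ) (x : Fin d → ℝ) : ℝ :=
  Filter.limsup φ (nhds x)

/-- Lower semicontinuous envelope `φ_*(x) = liminf_{y → x} φ(y)`. -/
noncomputable def lscEnv {d : ℕ} (φ : (Fin d → ℝ) → ℝ) (x : Fin d → ℝ) : ℝ :=
  Filter.liminf φ (nhds x)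

open Set Pointwise


lemma mono_aemeasurable {d : ℕ} {φ : (Fin d → ℝ) → ℝ} (hφ : Monotone φ) :
    AEMeasurable φ (volume : Measure (Fin d → ℝ)) := by
  have hnm : NullMeasurable φ (volume : Measure (Fin d → ℝ)) := by
    have h1 : (Real.measurableSpace) =
        MeasurableSpace.generateFrom (Set.range Set.Ioi) := by
      rw [BorelSpace.measurable_eq (α := ℝ), borel_eq_generateFrom_Ioi]
    intro s hs
    rw [h1] at hs
    induction hs with
    | basic t ht =>
      obtain ⟨a, rfl⟩ := ht
      have hu : IsUpperSet (φ ⁻¹' Set.Ioi a) := fun u v huv h => lt_of_lt_of_le h (hφ huv)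
      exact nullMeasurableSet_of_null_frontier hu.null_frontier
    | empty => simp
    | compl t ht iht => exact iht.compl
    | iUnion f hf ihf => rw [Set.preimage_iUnion]; exact NullMeasurableSet.iUnion ihf
  exact hnm.aemeasurable

-- quasi measure preserving affine map
lemma qmp_affine {d : ℕ} (b : Fin d → ℝ) {c : ℝ} (hc : c ≠ 0) :
    Measure.QuasiMeasurePreserving (fun z : Fin d → ℝ => b + c • z) volume volume := by
  refine ⟨(show Continuous (fun z : Fin d → ℝ => b + c • z) by fun_prop).measurable, ?_⟩
  have h1 : (fun z : Fin d → ℝ => b + c • z) = (fun z => b + z) ∘ (fun z => c • z) := rfl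
  rw [h1, ← Measure.map_map (measurable_const_add b) (measurable_const_smul c),
    Measure.map_addHaar_smul volume hc]
  rw [Measure.map_smul, MeasureTheory.map_add_left_eq_self volume b]
  intro s hs
  simp [hs]

variable {d : ℕ}

lemma norm_le_one_of_box {z : Fin d → ℝ}
    (hz : z ∈ Set.Icc (fun _ => (-1:ℝ)) (fun _ => (1:ℝ))) : ‖z‖ ≤ 1 := by
  rw [pi_norm_le_iff_of_nonneg zero_le_one]
  intro i
  rw [Real.norm_eq_abs, abs_le]
  exact ⟨hz.1 i, hz.2 i⟩

lemma integrable_aux {ρ φ : (Fin d → ℝ) → ℝ} (hc : Continuous ρ)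
    (hs : Function.support ρ ⊆ Set.Icc (fun _ => (-1:ℝ)) (fun _ => (1:ℝ)))
    (hφm : Monotone φ)
    (hφb : ∀ R : ℝ, 0 < R → ∃ M : ℝ, ∀ x : Fin d → ℝ, ‖x‖ ≤ R → |φ x| ≤ M)
    (b : Fin d → ℝ) {c : ℝ} (hcne : c ≠ 0) :
    Integrable (fun z => ρ z * φ (b + c • z)) (volume : Measure (Fin d → ℝ)) := by
  obtain ⟨M, hM⟩ := hφb (‖b‖ + |c| + 1) (by positivity)
  obtain ⟨Cρ, hCρ⟩ := (isCompact_Icc (a := fun _ => (-1:ℝ)) (b := fun _ => (1:ℝ))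
    ).exists_bound_of_continuousOn hc.continuousOn
  have hM0 : 0 ≤ M := le_trans (abs_nonneg _) (hM b (by nlinarith [abs_nonneg c, norm_nonneg b]))
  have hC0 : 0 ≤ Cρ := by
    rcases isCompact_Icc (a := fun _ => (-1:ℝ)) (b := fun _ => (1:ℝ)) with _
    exact le_trans (norm_nonneg (ρ (fun _ => 0))) (hCρ _ (by constructor <;> intro i <;> simp))
  have hmeas : AEStronglyMeasurable (fun z => ρ z * φ (b + c • z))
      (volume : Measure (Fin d → ℝ)) := by
    have h1 : AEMeasurable (fun z : Fin d → ℝ => φ (b + c • z)) volume :=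
      (mono_aemeasurable hφm).comp_quasiMeasurePreserving (qmp_affine b hcne)
    exact (hc.aemeasurable.mul h1).aestronglyMeasurable
  refine Integrable.mono' (g := (Set.Icc (fun _ => (-1:ℝ)) (fun _ => (1:ℝ))).indicator
    (fun _ => Cρ * M)) ?_ hmeas ?_
  · rw [integrable_indicator_iff measurableSet_Icc]
    exact integrableOn_const isCompact_Icc.measure_lt_top.ne
  · refine Filter.Eventually.of_forall fun z => ?_
    by_cases hz : z ∈ Set.Icc (fun _ => (-1:ℝ)) (fun _ => (1:ℝ))
    · rw [Set.indicator_of_mem hz]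
      have h2 : ‖b + c • z‖ ≤ ‖b‖ + |c| + 1 := by
        calc ‖b + c • z‖ ≤ ‖b‖ + ‖c • z‖ := norm_add_le _ _
        _ ≤ ‖b‖ + |c| * 1 := by
            rw [norm_smul, Real.norm_eq_abs]
            gcongr
            exact norm_le_one_of_box hz
        _ ≤ ‖b‖ + |c| + 1 := by nlinarith [abs_nonneg c]
      rw [norm_mul]
      have e1 : ‖ρ z‖ ≤ Cρ := hCρ z hz
      have e2 : ‖φ (b + c • z)‖ ≤ M := by rw [Real.norm_eq_abs]; exact hM _ h2
      exact mul_le_mul e1 e2 (norm_nonneg _) hC0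
    · have : ρ z = 0 := Function.notMem_support.1 fun h => hz (hs h)
      simp [this, Set.indicator_of_notMem hz, mul_nonneg hC0 hM0]

variable {d : ℕ}

lemma rep_up {ρ φ : (Fin d → ℝ) → ℝ} {ε : ℝ} (hε : 0 < ε) (x : Fin d → ℝ) :
    convUp ρ ε φ x
      = ∫ z : Fin d → ℝ, ρ z * φ ((x + ε • (1 : Fin d → ℝ)) + (-ε) • z) := by
  set a := x + ε • (1 : Fin d → ℝ) with ha
  have hεd : (0:ℝ) < ε ^ d := pow_pos hε d
  have key : (fun y : Fin d → ℝ => (ε ^ d)⁻¹ * ρ (ε⁻¹ • y) * φ (a - y))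
      = fun y => mollUp ρ ε (x - (a - y)) * φ (a - y) := by
    funext y
    have : x - (a - y) + ε • (1 : Fin d → ℝ) = y := by
      rw [ha]; abel
    rw [mollUp, this]
  have h1 : convUp ρ ε φ x
      = ∫ y : Fin d → ℝ, (ε ^ d)⁻¹ * ρ (ε⁻¹ • y) * φ (a - y) := by
    rw [key, convUp]
    have h2 : ∀ y : Fin d → ℝ, a - y = a + -y := fun y => by abel
    simp_rw [h2]
    rw [MeasureTheory.integral_neg_eq_self
      (fun y : Fin d → ℝ => mollUp ρ ε (x - (a + y)) * φ (a + y)) volume]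
    rw [MeasureTheory.integral_add_left_eq_self
      (μ := volume) (fun y : Fin d → ℝ => mollUp ρ ε (x - y) * φ y) a]
  rw [h1]
  have h3 := Measure.integral_comp_smul (μ := (volume : Measure (Fin d → ℝ)))
    (fun y : Fin d → ℝ => (ε ^ d)⁻¹ * ρ (ε⁻¹ • y) * φ (a - y)) ε
  have hfr : Module.finrank ℝ (Fin d → ℝ) = d := by
    simp [Module.finrank_pi]
  rw [hfr, abs_of_pos (by positivity : (0:ℝ) < (ε ^ d)⁻¹)] at h3
  have h4 : (fun z : Fin d → ℝ => (ε ^ d)⁻¹ * ρ (ε⁻¹ • ε • z) * φ (a - ε • z))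
      = fun z => (ε ^ d)⁻¹ * (ρ z * φ (a + (-ε) • z)) := by
    funext z
    rw [smul_smul, inv_mul_cancel₀ hε.ne', one_smul, neg_smul, mul_assoc, sub_eq_add_neg]
  rw [h4] at h3
  rw [MeasureTheory.integral_const_mul] at h3
  rw [smul_eq_mul] at h3
  exact (mul_left_cancel₀ (ne_of_gt (by positivity : (0:ℝ) < (ε ^ d)⁻¹)) h3).symm

variable {d : ℕ}

lemma tendsto_line {x : Fin d → ℝ} (c : Fin d → ℝ) :
    Tendsto (fun t : ℝ => x + t • c) (𝓝[>](0:ℝ)) (𝓝 x) := by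
  have h : Continuous (fun t : ℝ => x + t • c) := by continuity
  have := (h.tendsto 0).mono_left (nhdsWithin_le_nhds (s := Set.Ioi (0:ℝ)))
  simpa using this

lemma mono_line {φ : (Fin d → ℝ) → ℝ} (hφm : Monotone φ) (x : Fin d → ℝ) :
    Monotone (fun t : ℝ => φ (x + t • (1 : Fin d → ℝ))) := by
  intro t s hts
  apply hφm
  intro i
  simp only [Pi.add_apply, Pi.smul_apply, Pi.one_apply, smul_eq_mul, mul_one]
  linarith

lemma anti_line {φ : (Fin d → ℝ) → ℝ} (hφm : Monotone φ) (x : Fin d → ℝ) :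
    Antitone (fun t : ℝ => φ (x - t • (1 : Fin d → ℝ))) := by
  intro t s hts
  apply hφm
  intro i
  simp only [Pi.sub_apply, Pi.smul_apply, Pi.one_apply, smul_eq_mul, mul_one]
  linarith

lemma ev_bound {φ : (Fin d → ℝ) → ℝ}
    (hφb : ∀ R : ℝ, 0 < R → ∃ M : ℝ, ∀ x : Fin d → ℝ, ‖x‖ ≤ R → |φ x| ≤ M)
    (x : Fin d → ℝ) : ∃ M : ℝ, ∀ᶠ y in 𝓝 x, |φ y| ≤ M := by
  obtain ⟨M, hM⟩ := hφb (‖x‖ + 1) (by positivity)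
  refine ⟨M, ?_⟩
  have h : ∀ᶠ y in 𝓝 x, ‖y‖ < ‖x‖ + 1 :=
    (continuous_norm.tendsto x).eventually_lt_const (by linarith)
  filter_upwards [h] with y hy
  exact hM y hy.le

lemma ev_le_line {φ : (Fin d → ℝ) → ℝ} (hφm : Monotone φ) (x : Fin d → ℝ)
    {t : ℝ} (ht : 0 < t) :
    ∀ᶠ y in 𝓝 x, φ y ≤ φ (x + t • (1 : Fin d → ℝ)) := by
  have hU : IsOpen (Set.pi Set.univ fun i => Set.Iio (x i + t)) :=
    isOpen_set_pi Set.finite_univ fun i _ => isOpen_Iio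
  have hxU : x ∈ Set.pi Set.univ fun i => Set.Iio (x i + t) := by
    intro i _; simpa using ht
  filter_upwards [hU.mem_nhds hxU] with y hy
  apply hφm
  intro i
  have := hy i (Set.mem_univ i)
  simp only [Set.mem_Iio] at this
  simp only [Pi.add_apply, Pi.smul_apply, Pi.one_apply, smul_eq_mul, mul_one]
  linarith

lemma ev_ge_line {φ : (Fin d → ℝ) → ℝ} (hφm : Monotone φ) (x : Fin d → ℝ)
    {t : ℝ} (ht : 0 < t) :
    ∀ᶠ y in 𝓝 x, φ (x - t • (1 : Fin d → ℝ)) ≤ φ y := by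
  have hU : IsOpen (Set.pi Set.univ fun i => Set.Ioi (x i - t)) :=
    isOpen_set_pi Set.finite_univ fun i _ => isOpen_Ioi
  have hxU : x ∈ Set.pi Set.univ fun i => Set.Ioi (x i - t) := by
    intro i _; simp only [Set.mem_Ioi]; linarith
  filter_upwards [hU.mem_nhds hxU] with y hy
  apply hφm
  intro i
  have := hy i (Set.mem_univ i)
  simp only [Set.mem_Ioi] at this
  simp only [Pi.sub_apply, Pi.smul_apply, Pi.one_apply, smul_eq_mul, mul_one]
  linarith

lemma usc_eq {φ : (Fin d → ℝ) → ℝ} (hφm : Monotone φ)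
    (hφb : ∀ R : ℝ, 0 < R → ∃ M : ℝ, ∀ x : Fin d → ℝ, ‖x‖ ≤ R → |φ x| ≤ M)
    (x : Fin d → ℝ) :
    uscEnv φ x = sInf ((fun t : ℝ => φ (x + t • (1 : Fin d → ℝ))) '' Set.Ioi 0) := by
  obtain ⟨M, hM⟩ := ev_bound hφb x
  set g := fun t : ℝ => φ (x + t • (1 : Fin d → ℝ)) with hg
  have hne : ((g '' Set.Ioi 0) : Set ℝ).Nonempty := ⟨g 1, ⟨1, by simp⟩⟩
  have hbdd : BddBelow (g '' Set.Ioi 0) := by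
    refine ⟨φ x, ?_⟩
    rintro b ⟨t, ht, rfl⟩
    apply hφm
    intro i
    simp only [Pi.add_apply, Pi.smul_apply, Pi.one_apply, smul_eq_mul, mul_one, le_add_iff_nonneg_right]
    exact (Set.mem_Ioi.1 ht).le
  have hSne : {a : ℝ | ∀ᶠ y in 𝓝 x, φ y ≤ a}.Nonempty :=
    ⟨M, hM.mono fun y hy => (abs_le.1 hy).2⟩
  have hSbdd : BddBelow {a : ℝ | ∀ᶠ y in 𝓝 x, φ y ≤ a} := by
    refine ⟨-M, ?_⟩
    rintro a (ha : ∀ᶠ y in 𝓝 x, φ y ≤ a)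
    obtain ⟨y, hy1, hy2⟩ := (ha.and hM).exists
    linarith [(abs_le.1 hy2).1]
  rw [uscEnv, Filter.limsup_eq]
  apply le_antisymm
  · apply le_csInf hne
    rintro b ⟨t, ht, rfl⟩
    exact csInf_le hSbdd (ev_le_line hφm x (Set.mem_Ioi.1 ht))
  · apply le_csInf hSne
    intro a ha
    have htt : ∀ᶠ t in 𝓝[>](0:ℝ), φ (x + t • (1 : Fin d → ℝ)) ≤ a :=
      (tendsto_line (1 : Fin d → ℝ)).eventually ha
    obtain ⟨t, hta, ht0⟩ := (htt.and eventually_mem_nhdsWithin).exists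
    exact le_trans (csInf_le hbdd ⟨t, ht0, rfl⟩) hta

lemma lsc_eq {φ : (Fin d → ℝ) → ℝ} (hφm : Monotone φ)
    (hφb : ∀ R : ℝ, 0 < R → ∃ M : ℝ, ∀ x : Fin d → ℝ, ‖x‖ ≤ R → |φ x| ≤ M)
    (x : Fin d → ℝ) :
    lscEnv φ x = sSup ((fun t : ℝ => φ (x - t • (1 : Fin d → ℝ))) '' Set.Ioi 0) := by
  obtain ⟨M, hM⟩ := ev_bound hφb x
  set g := fun t : ℝ => φ (x - t • (1 : Fin d → ℝ)) with hg
  have hne : ((g '' Set.Ioi 0) : Set ℝ).Nonempty := ⟨g 1, ⟨1, by simp⟩⟩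
  have hbdd : BddAbove (g '' Set.Ioi 0) := by
    refine ⟨φ x, ?_⟩
    rintro b ⟨t, ht, rfl⟩
    apply hφm
    intro i
    simp only [Pi.sub_apply, Pi.smul_apply, Pi.one_apply, smul_eq_mul, mul_one]
    linarith [(Set.mem_Ioi.1 ht).le]
  have hSne : {a : ℝ | ∀ᶠ y in 𝓝 x, a ≤ φ y}.Nonempty :=
    ⟨-M, hM.mono fun y hy => by linarith [(abs_le.1 hy).1]⟩
  have hSbdd : BddAbove {a : ℝ | ∀ᶠ y in 𝓝 x, a ≤ φ y} := by
    refine ⟨M, ?_⟩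
    rintro a (ha : ∀ᶠ y in 𝓝 x, a ≤ φ y)
    obtain ⟨y, hy1, hy2⟩ := (ha.and hM).exists
    linarith [(abs_le.1 hy2).2]
  rw [lscEnv, Filter.liminf_eq]
  apply le_antisymm
  · apply csSup_le hSne
    intro a ha
    have htt : ∀ᶠ t in 𝓝[>](0:ℝ), a ≤ φ (x - t • (1 : Fin d → ℝ)) := by
      have := (tendsto_line (-(1 : Fin d → ℝ))).eventually ha
      simpa [sub_eq_add_neg, smul_neg] using this
    obtain ⟨t, hta, ht0⟩ := (htt.and eventually_mem_nhdsWithin).exists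
    exact le_trans hta (le_csSup hbdd ⟨t, ht0, rfl⟩)
  · apply csSup_le hne
    rintro b ⟨t, ht, rfl⟩
    exact le_csSup hSbdd (ev_ge_line hφm x (Set.mem_Ioi.1 ht))
lemma up_master {d : ℕ} {ρ φ : (Fin d → ℝ) → ℝ} (hc : Continuous ρ) (h0 : ∀ z, 0 ≤ ρ z)
    (hs : Function.support ρ ⊆ Set.Icc (fun _ => (-1:ℝ)) (fun _ => (1:ℝ)))
    (hi : ∫ z : Fin d → ℝ, ρ z = 1)
    (hφm : Monotone φ)
    (hφb : ∀ R : ℝ, 0 < R → ∃ M : ℝ, ∀ x : Fin d → ℝ, ‖x‖ ≤ R → |φ x| ≤ M) :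
    (∀ ε : ℝ, 0 < ε → Monotone (convUp ρ ε φ))
    ∧ (∀ ε : ℝ, 0 < ε → ∀ x, φ x ≤ convUp ρ ε φ x)
    ∧ (∀ ε δ : ℝ, 0 < ε → ε < δ → ∀ x, convUp ρ ε φ x ≤ convUp ρ δ φ x)
    ∧ (∀ x, Tendsto (fun ε => convUp ρ ε φ x) (𝓝[>](0:ℝ)) (𝓝 (uscEnv φ x))) := by
  have hρcs : HasCompactSupport ρ :=
    isCompact_Icc.of_isClosed_subset isClosed_closure
      (closure_minimal hs isClosed_Icc)
  have hρint : Integrable ρ (volume : Measure (Fin d → ℝ)) :=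
    hc.integrable_of_hasCompactSupport hρcs
  have hsupp : ∀ z ∈ Function.support ρ, ∀ i, -1 ≤ z i ∧ z i ≤ 1 :=
    fun z hz i => ⟨(hs hz).1 i, (hs hz).2 i⟩
  have hIa : ∀ (x : Fin d → ℝ) {ε : ℝ}, 0 < ε →
      Integrable (fun z => ρ z * φ ((x + ε • (1 : Fin d → ℝ)) + (-ε) • z))
        (volume : Measure (Fin d → ℝ)) :=
    fun x ε hε => integrable_aux hc hs hφm hφb _ (neg_ne_zero.2 hε.ne')
  have hcoord : ∀ (x z : Fin d → ℝ) (ε : ℝ) (i : Fin d),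
      ((x + ε • (1 : Fin d → ℝ)) + (-ε) • z) i = x i + ε + (-ε) * z i := by
    intro x z ε i
    simp
  have hconst : ∀ (C : ℝ), ∫ z : Fin d → ℝ, ρ z * C = C := by
    intro C; rw [integral_mul_const, hi, one_mul]
  have hmono : ∀ ε : ℝ, 0 < ε → Monotone (convUp ρ ε φ) := by
    intro ε hε x x' hxx'
    rw [rep_up hε, rep_up hε]
    refine integral_mono (hIa x hε) (hIa x' hε) fun z => ?_
    refine mul_le_mul_of_nonneg_left (hφm fun i => ?_) (h0 z)
    rw [hcoord, hcoord]
    have := hxx' i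
    linarith
  have hsand : ∀ ε : ℝ, 0 < ε → ∀ x, φ x ≤ convUp ρ ε φ x := by
    intro ε hε x
    rw [rep_up hε]
    rw [← hconst (φ x)]
    refine integral_mono (hρint.mul_const _) (hIa x hε) fun z => ?_
    by_cases hz : ρ z = 0
    · simp [hz]
    · refine mul_le_mul_of_nonneg_left (hφm fun i => ?_) (h0 z)
      rw [hcoord]
      have h1 := (hsupp z hz i).2
      nlinarith
  have hmonoe : ∀ ε δ : ℝ, 0 < ε → ε < δ → ∀ x, convUp ρ ε φ x ≤ convUp ρ δ φ x := by
    intro ε δ hε hεδ x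
    rw [rep_up hε, rep_up (hε.trans hεδ)]
    refine integral_mono (hIa x hε) (hIa x (hε.trans hεδ)) fun z => ?_
    by_cases hz : ρ z = 0
    · simp [hz]
    · refine mul_le_mul_of_nonneg_left (hφm fun i => ?_) (h0 z)
      rw [hcoord, hcoord]
      have h1 := (hsupp z hz i).2
      nlinarith
  refine ⟨hmono, hsand, hmonoe, ?_⟩
  intro x
  rw [usc_eq hφm hφb x]
  set g := fun t : ℝ => φ (x + t • (1 : Fin d → ℝ)) with hgdef
  set L := sInf (g '' Set.Ioi 0) with hLdef
  have hgmono : Monotone g := mono_line hφm x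
  have hgL : Tendsto g (𝓝[>](0:ℝ)) (𝓝 L) := hgmono.tendsto_nhdsGT 0
  have hbddb : BddBelow (g '' Set.Ioi 0) := by
    refine ⟨φ x, ?_⟩
    rintro b ⟨t, ht, rfl⟩
    have : g 0 ≤ g t := hgmono (le_of_lt ht)
    simpa [hgdef] using this
  have hφxL : φ x ≤ L := by
    refine le_csInf ⟨g 1, 1, by simp, rfl⟩ ?_
    rintro b ⟨t, ht, rfl⟩
    have : g 0 ≤ g t := hgmono (le_of_lt ht)
    simpa [hgdef] using this
  have hLle : ∀ t : ℝ, 0 < t → L ≤ g t := fun t ht => csInf_le hbddb ⟨t, ht, rfl⟩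
  have hup : ∀ ε : ℝ, 0 < ε → convUp ρ ε φ x ≤ g (2 * ε) := by
    intro ε hε
    rw [rep_up hε, ← hconst (g (2 * ε))]
    refine integral_mono (hIa x hε) (hρint.mul_const _) fun z => ?_
    by_cases hz : ρ z = 0
    · simp [hz]
    · refine mul_le_mul_of_nonneg_left (hφm fun i => ?_) (h0 z)
      rw [hcoord]
      simp only [hgdef, Pi.add_apply, Pi.smul_apply, Pi.one_apply, smul_eq_mul, mul_one]
      have h1 := (hsupp z hz i).1
      nlinarith
  set S : ℕ → Set (Fin d → ℝ) := fun n => Set.Iic (fun _ => 1 - 1/((n:ℝ)+1)) with hSdef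
  have hSmeas : ∀ n, MeasurableSet (S n) := by
    intro n
    have hSeq : S n = Set.pi Set.univ fun _ : Fin d => Set.Iic (1 - 1/((n:ℝ)+1)) := by
      ext z; simp [hSdef, Pi.le_def, Set.mem_Iic]
    rw [hSeq]
    exact MeasurableSet.univ_pi fun i => measurableSet_Iic
  have hSmono : Monotone S := by
    intro n m hnm
    apply Set.Iic_subset_Iic.2
    intro i
    have h1 : (0:ℝ) < (n:ℝ) + 1 := by positivity
    have h2 : ((n:ℝ)+1) ≤ ((m:ℝ)+1) := by
      have h3 : (n:ℝ) ≤ (m:ℝ) := Nat.cast_le.2 hnm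
      linarith
    have h4 := one_div_le_one_div_of_le h1 h2
    linarith
  set c : ℕ → ℝ := fun n => ∫ z in S n, ρ z with hcdef
  have hc0 : ∀ n, 0 ≤ c n := fun n => setIntegral_nonneg (hSmeas n) fun z _ => h0 z
  have hctend : Tendsto c atTop (𝓝 1) := by
    have hUmeas : MeasurableSet (⋃ n, S n) := MeasurableSet.iUnion hSmeas
    have hnull : (volume : Measure (Fin d → ℝ)) (⋃ i : Fin d, {z | z i = 1}) = 0 := by
      apply measure_iUnion_null
      intro i
      rw [MeasureTheory.volume_pi]
      exact Measure.pi_hyperplane _ i 1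
    have hsub : {z : Fin d → ℝ | ¬ (z ∈ (⋃ n, S n)ᶜ → ρ z = 0)} ⊆
        ⋃ i : Fin d, {z : Fin d → ℝ | z i = 1} := by
      intro z hz
      simp only [Set.mem_setOf_eq, Classical.not_imp, Set.mem_compl_iff] at hz
      obtain ⟨hzU, hzρ⟩ := hz
      by_contra hcon
      simp only [Set.mem_iUnion, Set.mem_setOf_eq, not_exists] at hcon
      have hlt : ∀ i, z i < 1 := fun i => lt_of_le_of_ne ((hsupp z hzρ i).2) (hcon i)
      have hchoice : ∀ i : Fin d, ∃ n : ℕ, 1/((n:ℝ)+1) < 1 - z i := by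
        intro i
        obtain ⟨n, hn⟩ := exists_nat_one_div_lt (by linarith [hlt i] : (0:ℝ) < 1 - z i)
        exact ⟨n, by linarith⟩
      choose nn hnn using hchoice
      apply hzU
      refine Set.mem_iUnion.2 ⟨Finset.univ.sup nn, Set.mem_Iic.2 fun i => ?_⟩
      have h1 : (nn i : ℝ) + 1 ≤ ((Finset.univ.sup nn : ℕ):ℝ) + 1 := by
        have h2 : nn i ≤ Finset.univ.sup nn := Finset.le_sup (Finset.mem_univ i)
        have h3 : ((nn i : ℕ):ℝ) ≤ ((Finset.univ.sup nn : ℕ):ℝ) := Nat.cast_le.2 h2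
        linarith
      have h4 : 1/(((Finset.univ.sup nn : ℕ):ℝ)+1) ≤ 1/((nn i:ℝ)+1) :=
        one_div_le_one_div_of_le (by positivity) h1
      have h5 := hnn i
      dsimp only
      linarith
    have hcompl : ∫ z in (⋃ n, S n)ᶜ, ρ z = 0 := by
      apply integral_eq_zero_of_ae
      rw [EventuallyEq, ae_restrict_iff' hUmeas.compl]
      rw [ae_iff]
      apply measure_mono_null ?_ hnull
      intro z hz
      simp only [Set.mem_setOf_eq, Pi.zero_apply] at hz
      exact hsub hz
    have hUint : ∫ z in ⋃ n, S n, ρ z = 1 := by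
      have hsplit := integral_add_compl hUmeas hρint
      rw [hcompl, add_zero, hi] at hsplit
      exact hsplit
    have htend := tendsto_setIntegral_of_monotone hSmeas hSmono hρint.integrableOn
    rwa [hUint] at htend
  have hlow : ∀ n : ℕ, ∀ ε : ℝ, 0 < ε →
      c n * g (1/((n:ℝ)+1) * ε) + (1 - c n) * φ x ≤ convUp ρ ε φ x := by
    intro n ε hε
    set σ := 1/((n:ℝ)+1) with hσdef
    have hσ0 : 0 < σ := by positivity
    rw [rep_up hε]
    set f := fun z : Fin d → ℝ => ρ z * φ ((x + ε • (1 : Fin d → ℝ)) + (-ε) • z) with hfdef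
    have hfi : Integrable f (volume : Measure (Fin d → ℝ)) := hIa x hε
    rw [← integral_add_compl (hSmeas n) hfi]
    have h1 : ∫ z in S n, ρ z * g (σ * ε) ≤ ∫ z in S n, f z := by
      refine setIntegral_mono_on ((hρint.mul_const _).integrableOn) hfi.integrableOn
        (hSmeas n) ?_
      intro z hzS
      by_cases hz : ρ z = 0
      · simp [hfdef, hz]
      · refine mul_le_mul_of_nonneg_left (hφm fun i => ?_) (h0 z)
        simp only [hgdef, Pi.add_apply, Pi.smul_apply, Pi.one_apply, smul_eq_mul, mul_one]
        have hzi : z i ≤ 1 - σ := Set.mem_Iic.1 hzS i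
        have hmul := mul_le_mul_of_nonneg_left hzi hε.le
        nlinarith
    have h1' : ∫ z in S n, ρ z * g (σ * ε) = c n * g (σ * ε) := by
      rw [integral_mul_const]
    have h2 : ∫ z in (S n)ᶜ, ρ z * φ x ≤ ∫ z in (S n)ᶜ, f z := by
      refine setIntegral_mono_on ((hρint.mul_const _).integrableOn) hfi.integrableOn
        (hSmeas n).compl ?_
      intro z _
      by_cases hz : ρ z = 0
      · simp [hfdef, hz]
      · refine mul_le_mul_of_nonneg_left (hφm fun i => ?_) (h0 z)
        rw [hcoord]
        have h1 := (hsupp z hz i).2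
        nlinarith
    have hcomplρ : ∫ z in (S n)ᶜ, ρ z = 1 - c n := by
      have hsplit := integral_add_compl (hSmeas n) hρint
      rw [hi] at hsplit
      rw [hcdef] at *
      linarith
    have h2' : ∫ z in (S n)ᶜ, ρ z * φ x = (1 - c n) * φ x := by
      rw [integral_mul_const, hcomplρ]
    rw [← h1', ← h2']
    exact add_le_add h1 h2
  refine tendsto_order.2 ⟨?_, ?_⟩
  · intro a ha
    have h0' : Tendsto (fun n => (1 - c n) * (L - φ x)) atTop (𝓝 0) := by
      have ht := ((tendsto_const_nhds (x := (1:ℝ)) (f := atTop)).sub hctend).mul_const (L - φ x)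
      simpa using ht
    obtain ⟨n, hn⟩ := (h0'.eventually_lt_const (by linarith : (0:ℝ) < L - a)).exists
    apply eventually_nhdsWithin_of_forall
    intro ε hε
    have hε' : (0:ℝ) < ε := hε
    have hg1 : L ≤ g (1/((n:ℝ)+1) * ε) := hLle _ (by positivity)
    have h1 := hlow n ε hε'
    have h3 := hc0 n
    nlinarith [mul_le_mul_of_nonneg_left hg1 h3]
  · intro b hb
    have h2ε : Tendsto (fun ε : ℝ => 2*ε) (𝓝[>](0:ℝ)) (𝓝[>](0:ℝ)) := by
      apply tendsto_nhdsWithin_of_tendsto_nhds_of_eventually_within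
      · have hco : Tendsto (fun ε : ℝ => 2*ε) (𝓝 0) (𝓝 (2*0)) :=
          (continuous_const.mul continuous_id).tendsto 0
        simpa using hco.mono_left (nhdsWithin_le_nhds)
      · filter_upwards [self_mem_nhdsWithin] with ε hε
        exact Set.mem_Ioi.2 (mul_pos two_pos hε)
    have hev : ∀ᶠ ε in 𝓝[>](0:ℝ), g (2*ε) < b := (hgL.comp h2ε).eventually_lt_const hb
    filter_upwards [hev, self_mem_nhdsWithin] with ε h1 h2
    exact lt_of_le_of_lt (hup ε h2) h1

lemma down_eq_neg_up {d : ℕ} (ρ φ : (Fin d → ℝ) → ℝ) (ε : ℝ) (x : Fin d → ℝ) :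
    convDown ρ ε φ x = - convUp (fun z => ρ (-z)) ε (fun y => -φ (-y)) (-x) := by
  have hH : ∀ y : Fin d → ℝ, mollUp (fun z => ρ (-z)) ε (-x + y) * φ y
      = mollDown ρ ε (x - y) * φ y := by
    intro y
    congr 1
    rw [mollUp, mollDown]
    congr 2
    rw [← smul_neg]
    congr 1
    abel
  calc convDown ρ ε φ x = ∫ y : Fin d → ℝ, mollDown ρ ε (x - y) * φ y := rfl
  _ = ∫ y : Fin d → ℝ, mollUp (fun z => ρ (-z)) ε (-x + y) * φ y := by
      simp_rw [hH]
  _ = ∫ y : Fin d → ℝ, mollUp (fun z => ρ (-z)) ε (-x + -y) * φ (-y) :=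
      (MeasureTheory.integral_neg_eq_self
        (fun y : Fin d → ℝ => mollUp (fun z => ρ (-z)) ε (-x + y) * φ y) volume).symm
  _ = - convUp (fun z => ρ (-z)) ε (fun y => -φ (-y)) (-x) := by
      rw [convUp, ← integral_neg]
      congr 1
      funext y
      have : -x + -y = -x - y := by abel
      rw [this]
      ring

lemma usc_neg {d : ℕ} {φ : (Fin d → ℝ) → ℝ} (hφm : Monotone φ)
    (hφb : ∀ R : ℝ, 0 < R → ∃ M : ℝ, ∀ x : Fin d → ℝ, ‖x‖ ≤ R → |φ x| ≤ M)
    (x : Fin d → ℝ) :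
    uscEnv (fun y => -φ (-y)) (-x) = - lscEnv φ x := by
  have hψm : Monotone fun y : Fin d → ℝ => -φ (-y) := by
    intro a b hab
    have := hφm (neg_le_neg hab)
    dsimp only
    linarith
  have hψb : ∀ R : ℝ, 0 < R → ∃ M : ℝ, ∀ y : Fin d → ℝ, ‖y‖ ≤ R → |-φ (-y)| ≤ M := by
    intro R hR
    obtain ⟨M, hM⟩ := hφb R hR
    exact ⟨M, fun y hy => by rw [abs_neg]; exact hM _ (by rwa [norm_neg])⟩
  rw [usc_eq hψm hψb (-x), lsc_eq hφm hφb x]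
  have h1 : (fun t : ℝ => -φ (-(-x + t • (1 : Fin d → ℝ)))) =
      fun t : ℝ => -φ (x - t • (1 : Fin d → ℝ)) := by
    funext t
    congr 2
    abel
  rw [h1]
  have h2 : (fun t : ℝ => -φ (x - t • (1 : Fin d → ℝ))) '' Set.Ioi 0
      = (-1 : ℝ) • ((fun t : ℝ => φ (x - t • (1 : Fin d → ℝ))) '' Set.Ioi 0) := by
    ext b
    simp only [Set.mem_image, Set.mem_smul_set]
    constructor
    · rintro ⟨t, ht, rfl⟩
      exact ⟨φ (x - t • (1 : Fin d → ℝ)), ⟨t, ht, rfl⟩, by rw [smul_eq_mul]; ring⟩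
    · rintro ⟨a, ⟨t, ht, rfl⟩, rfl⟩
      exact ⟨t, ht, by rw [smul_eq_mul]; ring⟩
  rw [h2, Real.sInf_smul_of_nonpos (by norm_num : (-1:ℝ) ≤ 0)]
  simp


/-- one-sided mollifications of a locally bounded increasing function `φ`:
(a) `φ^ε` and `φ_ε` are increasing and sandwich `φ`; (b) they are monotone in `ε` and
converge pointwise, as `ε ↓ 0`, to the upper and lower semicontinuous envelopes of `φ`,
respectively; (c) `φ^ε(x - 2ε𝟙) = φ_ε(x)` for all `ε > 0` and `x`. -/
theorem stmt4 {d : ℕ} (ρ : (Fin d → ℝ) → ℝ)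
    (hρ_smooth : ContDiff ℝ (⊤ : ℕ∞) ρ) (hρ_nonneg : ∀ z, 0 ≤ ρ z)
    (hρ_supp : Function.support ρ ⊆ Set.Icc (fun _ => (-1 : ℝ)) (fun _ => (1 : ℝ)))
    (hρ_int : ∫ z : Fin d → ℝ, ρ z = 1)
    (φ : (Fin d → ℝ) → ℝ)
    (hφ_mono : Monotone φ)
    (hφ_locbdd : ∀ R : ℝ, 0 < R → ∃ M : ℝ, ∀ x : Fin d → ℝ, ‖x‖ ≤ R → |φ x| ≤ M) :
    (∀ ε : ℝ, 0 < ε →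
      Monotone (convUp ρ ε φ) ∧ Monotone (convDown ρ ε φ) ∧
      ∀ x, convDown ρ ε φ x ≤ φ x ∧ φ x ≤ convUp ρ ε φ x) ∧
    ((∀ ε δ : ℝ, 0 < ε → ε < δ → ∀ x,
        convUp ρ ε φ x ≤ convUp ρ δ φ x ∧ convDown ρ δ φ x ≤ convDown ρ ε φ x) ∧
      ∀ x : Fin d → ℝ,
        Filter.Tendsto (fun ε => convUp ρ ε φ x) (𝓝[>] (0 : ℝ)) (𝓝 (uscEnv φ x)) ∧
        Filter.Tendsto (fun ε => convDown ρ ε φ x) (𝓝[>] (0 : ℝ)) (𝓝 (lscEnv φ x))) ∧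
    (∀ ε : ℝ, 0 < ε → ∀ x : Fin d → ℝ,
      convUp ρ ε φ (x - (2 * ε) • (1 : Fin d → ℝ)) = convDown ρ ε φ x) := by
  have hρc : Continuous ρ := hρ_smooth.continuous
  have hρ'c : Continuous fun z : Fin d → ℝ => ρ (-z) := hρc.comp continuous_neg
  have hρ'0 : ∀ z : Fin d → ℝ, 0 ≤ ρ (-z) := fun z => hρ_nonneg _
  have hρ's : (Function.support fun z : Fin d → ℝ => ρ (-z)) ⊆
      Set.Icc (fun _ => (-1 : ℝ)) (fun _ => (1 : ℝ)) := by
    intro z hz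
    have hz' : -z ∈ Function.support ρ := hz
    have hIcc := hρ_supp hz'
    constructor
    · intro i
      have h2 := hIcc.2 i
      simp only [Pi.neg_apply] at h2
      dsimp only
      linarith
    · intro i
      have h1 := hIcc.1 i
      simp only [Pi.neg_apply] at h1
      dsimp only
      linarith
  have hρ'i : ∫ z : Fin d → ℝ, ρ (-z) = 1 := by
    rw [MeasureTheory.integral_neg_eq_self (fun z => ρ z) volume]
    exact hρ_int
  have hψm : Monotone fun y : Fin d → ℝ => -φ (-y) := by
    intro a b hab
    have := hφ_mono (neg_le_neg hab)
    dsimp only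
    linarith
  have hψb : ∀ R : ℝ, 0 < R → ∃ M : ℝ, ∀ y : Fin d → ℝ, ‖y‖ ≤ R → |-φ (-y)| ≤ M := by
    intro R hR
    obtain ⟨M, hM⟩ := hφ_locbdd R hR
    exact ⟨M, fun y hy => by rw [abs_neg]; exact hM _ (by rwa [norm_neg])⟩
  obtain ⟨hUm, hUs, hUe, hUt⟩ := up_master hρc hρ_nonneg hρ_supp hρ_int hφ_mono hφ_locbdd
  obtain ⟨hDm, hDs, hDe, hDt⟩ := up_master hρ'c hρ'0 hρ's hρ'i hψm hψb
  have hdual : ∀ (ε : ℝ) (x : Fin d → ℝ),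
      convDown ρ ε φ x = - convUp (fun z => ρ (-z)) ε (fun y => -φ (-y)) (-x) :=
    fun ε x => down_eq_neg_up ρ φ ε x
  refine ⟨?_, ⟨?_, ?_⟩, ?_⟩
  · intro ε hε
    refine ⟨hUm ε hε, ?_, fun x => ⟨?_, hUs ε hε x⟩⟩
    · intro x y hxy
      rw [hdual, hdual]
      exact neg_le_neg (hDm ε hε (neg_le_neg hxy))
    · rw [hdual]
      have h1 := hDs ε hε (-x)
      simp only [neg_neg] at h1
      linarith
  · intro ε δ hε hεδ x
    refine ⟨hUe ε δ hε hεδ x, ?_⟩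
    rw [hdual, hdual]
    exact neg_le_neg (hDe ε δ hε hεδ (-x))
  · intro x
    refine ⟨hUt x, ?_⟩
    have h1 := (hDt (-x)).neg
    have h2 : (fun ε => convDown ρ ε φ x)
        = fun ε => - convUp (fun z => ρ (-z)) ε (fun y => -φ (-y)) (-x) :=
      funext fun ε => hdual ε x
    rw [h2]
    have h3 : -(uscEnv (fun y : Fin d → ℝ => -φ (-y)) (-x)) = lscEnv φ x := by
      rw [usc_neg hφ_mono hφ_locbdd x, neg_neg]
    rwa [h3] at h1
  · intro ε hε x
    rw [convUp, convDown]
    congr 1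
    funext y
    congr 1
    rw [mollUp, mollDown]
    congr 2
    congr 1
    rw [two_mul, add_smul]
    abel
end

section
/- Let T > 0 and let B : [0,T]×ℝ^d → ℝ^d be Borel measurable, such that for a.e. t ∈ [0,T] the map x ↦ B(t,x) is differentiable, for every R > 0 the function t ↦ sup_{|x| ≤ R} ‖D_x B(t,x)‖ is integrable on [0,T], and ∂_{x_i} B^j(t,x) ≥ 0 for all i ≠ j, a.e. t ∈ [0,T] and all x ∈ ℝ^d. Let X, Y : [0,T] → ℝ^d be Lipschitz continuous with X(0) ≤ Y(0) coordinatewise, and suppose that for a.e. t ∈ [0,T], X'(t) ≤ B(t, X(t)) and Y'(t) ≥ B(t, Y(t)) coordinatewise. Then X(t) ≤ Y(t) coordinatewise for all t ∈ [0,T]. -/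
/-!
Compare `X` and `Y` through `u t = ‖(X t - Y t)⁺‖` (sup norm), the largest positive excess of
`X` over `Y`. It is Lipschitz, hence absolutely continuous, and `u 0 = 0`. Where `u` is
differentiable and positive, it touches an active coordinate `X_j - Y_j` from above, so
`u' = X_j' - Y_j' ≤ B(t, X)_j - B(t, Y)_j`. Along the segment from `Y` to `X` the `j`-th
coordinate of `X - Y` is the largest one, so quasimonotonicity (nonnegative off-diagonal partial
derivatives) bounds this increment by `‖D_x B‖ * u ≤ g t * u`, with `g` the integrable bound on a
ball containing both trajectories. Gronwall's argument for absolutely continuous functions with an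
integrable coefficient then forces `u = 0`.
-/

open MeasureTheory Set Filter Topology

theorem AbsolutelyContinuousOnInterval.sub_le_integral_of_deriv_le {f φ : ℝ → ℝ} {a b : ℝ}
    (hab : a ≤ b) (hf : AbsolutelyContinuousOnInterval f a b)
    (hφ : IntervalIntegrable φ volume a b)
    (hderiv : deriv f ≤ᵐ[volume.restrict (Icc a b)] φ) :
    f b - f a ≤ ∫ t in a..b, φ t := by
  rw [← hf.integral_deriv_eq_sub]
  exact intervalIntegral.integral_mono_ae_restrict hab hf.intervalIntegrable_deriv hφ hderiv

theorem eqOn_zero_of_le_integral_mul {u ψ : ℝ → ℝ} {a b : ℝ} (hab : a ≤ b)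
    (hu : ContinuousOn u (Icc a b)) (hu_nonneg : ∀ t ∈ Icc a b, 0 ≤ u t)
    (hψ : IntervalIntegrable ψ volume a b) (hψ_nonneg : 0 ≤ᵐ[volume.restrict (Icc a b)] ψ)
    (hψ_lt : ∫ t in a..b, ψ t < 1)
    (hle : ∀ t ∈ Icc a b, u t ≤ ∫ s in a..t, ψ s * u s) :
    EqOn u 0 (Icc a b) := by
  obtain ⟨τ, hτ, hmax⟩ := isCompact_Icc.exists_isMaxOn (nonempty_Icc.2 hab) hu
  have hψu : IntervalIntegrable (fun s => ψ s * u s) volume a b :=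
    hψ.mul_continuousOn (by rwa [uIcc_of_le hab])
  have hψu_nonneg : 0 ≤ᵐ[volume.restrict (Icc a b)] fun s => ψ s * u s := by
    filter_upwards [hψ_nonneg, ae_restrict_mem measurableSet_Icc] with s hs hsI
    exact mul_nonneg hs (hu_nonneg s hsI)
  have hψu_le : (fun s => ψ s * u s) ≤ᵐ[volume.restrict (Icc a b)] fun s => ψ s * u τ := by
    filter_upwards [hψ_nonneg, ae_restrict_mem measurableSet_Icc] with s hs hsI
    exact mul_le_mul_of_nonneg_left (hmax hsI) hs
  have hτ_le : u τ ≤ (∫ t in a..b, ψ t) * u τ := calc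
    u τ ≤ ∫ s in a..τ, ψ s * u s := hle τ hτ
    _ ≤ ∫ s in a..b, ψ s * u s :=
      intervalIntegral.integral_mono_interval le_rfl hτ.1 hτ.2
        (ae_restrict_of_ae_restrict_of_subset Ioc_subset_Icc_self hψu_nonneg) hψu
    _ ≤ ∫ s in a..b, ψ s * u τ :=
      intervalIntegral.integral_mono_ae_restrict hab hψu (hψ.mul_const _) hψu_le
    _ = (∫ t in a..b, ψ t) * u τ := intervalIntegral.integral_mul_const _ _
  have hτ_nonpos : u τ ≤ 0 := by nlinarith [hu_nonneg τ hτ]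
  exact fun t ht => le_antisymm ((hmax ht).trans hτ_nonpos) (hu_nonneg t ht)

theorem AbsolutelyContinuousOnInterval.eqOn_zero_of_deriv_le_mul {u ψ : ℝ → ℝ} {a b : ℝ}
    (hu : AbsolutelyContinuousOnInterval u a b) (hu_nonneg : ∀ t ∈ Icc a b, 0 ≤ u t)
    (hua : u a = 0) (hψ : IntegrableOn ψ (Icc a b))
    (hψ_nonneg : 0 ≤ᵐ[volume.restrict (Icc a b)] ψ)
    (hderiv : ∀ᵐ t ∂volume.restrict (Icc a b), deriv u t ≤ ψ t * u t) :
    EqOn u 0 (Icc a b) := by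
  have hcont : ContinuousOn u (Icc a b) := hu.continuousOn.mono Icc_subset_uIcc
  have hψint : ∀ s ∈ Icc a b, ∀ t ∈ Icc a b, IntervalIntegrable ψ volume s t :=
    fun s hs t ht => (hψ.mono_set (uIcc_subset_Icc hs ht)).intervalIntegrable
  have hgrowth : ∀ s ∈ Icc a b, ∀ t ∈ Icc a b, s ≤ t →
      u t - u s ≤ ∫ r in s..t, ψ r * u r := by
    intro s hs t ht hst
    have hsub : Icc s t ⊆ Icc a b := Icc_subset_Icc hs.1 ht.2
    refine (hu.mono ?_).sub_le_integral_of_deriv_le hst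
      ((hψint s hs t ht).mul_continuousOn (hcont.mono (uIcc_subset_Icc hs ht)))
      (ae_restrict_of_ae_restrict_of_subset hsub hderiv)
    rw [uIcc_of_le hst]
    exact hsub.trans Icc_subset_uIcc
  have hclosed : IsClosed (u ⁻¹' {0} ∩ Icc a b) := by
    rw [inter_comm]
    exact hcont.preimage_isClosed_of_isClosed isClosed_Icc isClosed_singleton
  -- continuous induction: from a zero of `u`, it stays zero as long as `ψ` has mass `< 1`
  refine fun t ht => hclosed.Icc_subset_of_forall_mem_nhdsWithin hua ?_ ht
  rintro x ⟨hux, hxa, hxb⟩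
  have hxI : x ∈ Icc a b := ⟨hxa, hxb.le⟩
  have hbI : b ∈ Icc a b := ⟨hxa.trans hxb.le, le_rfl⟩
  have hψ_small : ∀ᶠ c in 𝓝[>] x, c ∈ Ioc x b ∧ ∫ r in x..c, ψ r < 1 := by
    have hprim := (intervalIntegral.continuousOn_primitive_interval' (hψint x hxI b hbI)
      left_mem_uIcc).continuousWithinAt left_mem_uIcc
    have hnhds : 𝓝[>] x ≤ 𝓝[uIcc x b] x :=
      nhdsWithin_le_of_mem (by rw [uIcc_of_le hxb.le]; exact Icc_mem_nhdsGT hxb)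
    exact Filter.Eventually.and (Ioc_mem_nhdsGT hxb)
      (hnhds (hprim.eventually (gt_mem_nhds (by simp))))
  obtain ⟨c, ⟨hxc, hcb⟩, hc⟩ := hψ_small.exists
  have hsub : Icc x c ⊆ Icc a b := Icc_subset_Icc hxa hcb
  have hle : ∀ r ∈ Icc x c, u r ≤ ∫ s in x..r, ψ s * u s := fun r hr => by
    simpa [show u x = 0 from hux] using hgrowth x hxI r (hsub hr) hr.1
  exact mem_of_superset (Icc_mem_nhdsGT hxc) <| eqOn_zero_of_le_integral_mul hxc.le
    (hcont.mono hsub) (fun r hr => hu_nonneg r (hsub hr))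
    (hψint x hxI c (hsub (right_mem_Icc.2 hxc.le)))
    (ae_restrict_of_ae_restrict_of_subset hsub hψ_nonneg) hc hle

theorem HasDerivAt.eq_of_eventuallyLE_of_eq {f g : ℝ → ℝ} {f' g' t : ℝ}
    (hf : HasDerivAt f f' t) (hg : HasDerivAt g g' t) (hle : f ≤ᶠ[𝓝 t] g) (heq : f t = g t) :
    f' = g' := by
  have hmin : IsLocalMin (fun s => g s - f s) t := by
    filter_upwards [hle] with s hs
    simpa [heq] using hs
  linarith [hmin.hasDerivAt_eq_zero (hg.sub hf)]

section PosPart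

variable {ι : Type*} [Fintype ι]

theorem lipschitzWith_norm_posPart : LipschitzWith 1 fun v : ι → ℝ => ‖v⁺‖ := by
  refine LipschitzWith.of_dist_le_mul fun v w => ?_
  rw [NNReal.coe_one, one_mul, Real.dist_eq, dist_eq_norm]
  refine (abs_norm_sub_norm_le _ _).trans <|
    (pi_norm_le_iff_of_nonneg (norm_nonneg _)).2 fun i => ?_
  simpa [Real.norm_eq_abs, posPart_def] using
    (abs_max_sub_max_le_abs (v i) (w i) 0).trans (norm_le_pi_norm (v - w) i)

theorem apply_le_norm_posPart (v : ι → ℝ) (i : ι) : v i ≤ ‖v⁺‖ := calc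
  v i ≤ (v i)⁺ := le_posPart _
  _ ≤ ‖v⁺ i‖ := by rw [Pi.posPart_apply, Real.norm_eq_abs]; exact le_abs_self _
  _ ≤ ‖v⁺‖ := norm_le_pi_norm _ i

theorem exists_apply_eq_norm_posPart {v : ι → ℝ} (h : 0 < ‖v⁺‖) : ∃ j, v j = ‖v⁺‖ := by
  have : Nonempty ι := by
    by_contra hι
    rw [not_nonempty_iff] at hι
    simp [Subsingleton.elim v 0] at h
  obtain ⟨j, hj⟩ := (IsGreatest.pi_norm v⁺).1
  refine ⟨j, ?_⟩
  simp only [← hj, Pi.posPart_apply, Real.norm_eq_abs, abs_of_nonneg (posPart_nonneg _)] at h ⊢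
  exact (posPart_eq_self.2 (posPart_pos_iff.1 h).le).symm

end PosPart

section Quasimonotone

variable {ι : Type*} [Fintype ι] [DecidableEq ι]

theorem ContinuousLinearMap.apply_nonneg_of_offDiag_nonneg (A : (ι → ℝ) →L[ℝ] ι → ℝ)
    {j : ι} (hA : ∀ i, i ≠ j → 0 ≤ A (Pi.single i 1) j) {v : ι → ℝ} (hv : 0 ≤ v) (hvj : v j = 0) :
    0 ≤ A v j := by
  rw [← Finset.univ_sum_single v, map_sum, Finset.sum_apply]
  refine Finset.sum_nonneg fun i _ => ?_
  rcases eq_or_ne i j with rfl | hij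
  · simp [hvj]
  · rw [show Pi.single i (v i) = v i • (Pi.single i 1 : ι → ℝ) by simp [← Pi.single_smul],
      map_smul, Pi.smul_apply, smul_eq_mul]
    exact mul_nonneg (hv i) (hA i hij)

theorem ContinuousLinearMap.apply_le_opNorm_mul_of_offDiag_nonneg (A : (ι → ℝ) →L[ℝ] ι → ℝ)
    {j : ι} (hA : ∀ i, i ≠ j → 0 ≤ A (Pi.single i 1) j) {w : ι → ℝ} (hw : ∀ i, w i ≤ w j)
    (hwj : 0 ≤ w j) : A w j ≤ ‖A‖ * w j := by
  set one : ι → ℝ := fun _ => 1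
  have hdecomp : A w j = w j * A one j - A (w j • one - w) j := by
    simp [map_sub, map_smul]
  -- `one` has sup norm at most `1`, so no dimension factor enters the bound
  have hone : A one j ≤ ‖A‖ := calc
    A one j ≤ ‖A one‖ := (le_abs_self _).trans (norm_le_pi_norm (A one) j)
    _ ≤ ‖A‖ * ‖one‖ := A.le_opNorm one
    _ ≤ ‖A‖ := mul_le_of_le_one_right (norm_nonneg A) ((pi_norm_const_le 1).trans norm_one.le)
  have hrest : 0 ≤ A (w j • one - w) j :=
    A.apply_nonneg_of_offDiag_nonneg hA (fun i => by simpa [one] using hw i) (by simp [one])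
  rw [hdecomp]
  nlinarith

theorem apply_sub_apply_le_of_offDiag_nonneg {F : (ι → ℝ) → ι → ℝ} {x y : ι → ℝ} {j : ι} {L : ℝ}
    (hF : Differentiable ℝ F)
    (hoff : ∀ z ∈ segment ℝ y x, ∀ i, i ≠ j → 0 ≤ fderiv ℝ F z (Pi.single i 1) j)
    (hL : ∀ z ∈ segment ℝ y x, ‖fderiv ℝ F z‖ ≤ L)
    (hmax : ∀ i, x i - y i ≤ x j - y j) (hpos : 0 ≤ x j - y j) :
    F x j - F y j ≤ L * (x j - y j) := by
  set γ : ℝ → ι → ℝ := fun s => y + s • (x - y)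
  have hγ : ∀ s, HasDerivAt γ (x - y) s := fun s => by
    have := ((hasDerivAt_id' s).smul_const (x - y)).const_add y
    rwa [one_smul] at this
  have hφ : ∀ s, HasDerivAt (fun s => F (γ s) j) (fderiv ℝ F (γ s) (x - y) j) s := fun s =>
    (ContinuousLinearMap.proj (R := ℝ) (φ := fun _ : ι => ℝ) j).hasFDerivAt.comp_hasDerivAt s
      ((hF (γ s)).hasFDerivAt.comp_hasDerivAt s (hγ s))
  have hderiv : ∀ s ∈ interior (Icc (0 : ℝ) 1),
      deriv (fun s => F (γ s) j) s ≤ L * (x j - y j) := by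
    intro s hs
    have hz : γ s ∈ segment ℝ y x := by
      rw [segment_eq_image']
      exact ⟨s, interior_subset hs, rfl⟩
    rw [(hφ s).deriv]
    exact ((fderiv ℝ F (γ s)).apply_le_opNorm_mul_of_offDiag_nonneg (hoff _ hz)
      (by simpa using hmax) hpos).trans (mul_le_mul_of_nonneg_right (hL _ hz) hpos)
  simpa [γ] using (convex_Icc 0 1).image_sub_le_mul_sub_of_deriv_le
    (fun s _ => (hφ s).continuousAt.continuousWithinAt)
    (fun s _ => (hφ s).differentiableAt.differentiableWithinAt) hderiv
    0 (left_mem_Icc.2 zero_le_one) 1 (right_mem_Icc.2 zero_le_one) zero_le_one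

theorem deriv_norm_posPart_sub_le {F : (ι → ℝ) → ι → ℝ} {X Y : ℝ → ι → ℝ} {X' Y' : ι → ℝ} {t L : ℝ}
    (hX : HasDerivAt X X' t) (hY : HasDerivAt Y Y' t) (hXF : X' ≤ F (X t)) (hYF : F (Y t) ≤ Y')
    (hF : Differentiable ℝ F) (hoff : ∀ z i j, i ≠ j → 0 ≤ fderiv ℝ F z (Pi.single i 1) j)
    (hL : ∀ z ∈ segment ℝ (Y t) (X t), ‖fderiv ℝ F z‖ ≤ L)
    (hu : DifferentiableAt ℝ (fun s => ‖(X s - Y s)⁺‖) t) :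
    deriv (fun s => ‖(X s - Y s)⁺‖) t ≤ L * ‖(X t - Y t)⁺‖ := by
  rcases (norm_nonneg (X t - Y t)⁺).eq_or_lt with hzero | hpos
  · have hmin := (hasDerivAt_const t (0 : ℝ)).eq_of_eventuallyLE_of_eq hu.hasDerivAt
      (Eventually.of_forall fun s => norm_nonneg _) hzero
    rw [← hmin, ← hzero, mul_zero]
  · obtain ⟨j, hj⟩ := exists_apply_eq_norm_posPart hpos
    rw [Pi.sub_apply] at hj
    have hcoord := (hasDerivAt_pi.1 hX j).sub (hasDerivAt_pi.1 hY j)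
    have htouch := hcoord.eq_of_eventuallyLE_of_eq hu.hasDerivAt
      (Eventually.of_forall fun s => apply_le_norm_posPart (X s - Y s) j) hj
    calc deriv (fun s => ‖(X s - Y s)⁺‖) t = X' j - Y' j := htouch.symm
      _ ≤ F (X t) j - F (Y t) j := by linarith [hXF j, hYF j]
      _ ≤ L * (X t j - Y t j) :=
        apply_sub_apply_le_of_offDiag_nonneg hF (fun z _ i hi => hoff z i j hi) hL
          (fun i => (apply_le_norm_posPart (X t - Y t) i).trans_eq hj.symm)
          (hpos.le.trans_eq hj.symm)
      _ = L * ‖(X t - Y t)⁺‖ := by rw [hj]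

end Quasimonotone

theorem stmt6_general {d : ℕ} (T : ℝ) (hT : 0 < T)
    (B : ℝ → (Fin d → ℝ) → (Fin d → ℝ))
    (hdiff : ∀ᵐ t ∂volume.restrict (Set.Icc 0 T), Differentiable ℝ (B t))
    (hint : ∀ R : ℝ, 0 < R → ∃ g : ℝ → ℝ, IntegrableOn g (Set.Icc 0 T) ∧
      ∀ᵐ t ∂volume.restrict (Set.Icc 0 T), ∀ x : Fin d → ℝ, ‖x‖ ≤ R →
        ‖fderiv ℝ (B t) x‖ ≤ g t)
    (hoffdiag : ∀ᵐ t ∂volume.restrict (Set.Icc 0 T), ∀ x : Fin d → ℝ, ∀ i j : Fin d,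
      i ≠ j → 0 ≤ fderiv ℝ (B t) x (Pi.single i 1) j)
    (X Y X' Y' : ℝ → (Fin d → ℝ))
    (hX_lip : ∃ K : NNReal, LipschitzOnWith K X (Set.Icc 0 T))
    (hY_lip : ∃ K : NNReal, LipschitzOnWith K Y (Set.Icc 0 T))
    (hXY0 : X 0 ≤ Y 0)
    (hX : ∀ᵐ t ∂volume.restrict (Set.Icc 0 T), HasDerivAt X (X' t) t ∧ X' t ≤ B t (X t))
    (hY : ∀ᵐ t ∂volume.restrict (Set.Icc 0 T), HasDerivAt Y (Y' t) t ∧ B t (Y t) ≤ Y' t) :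
    ∀ t ∈ Set.Icc (0 : ℝ) T, X t ≤ Y t := by
  obtain ⟨KX, hKX⟩ := hX_lip
  obtain ⟨KY, hKY⟩ := hY_lip
  obtain ⟨CX, hCX⟩ := isCompact_Icc.exists_bound_of_continuousOn hKX.continuousOn
  obtain ⟨CY, hCY⟩ := isCompact_Icc.exists_bound_of_continuousOn hKY.continuousOn
  set R := max (max CX CY) 1
  obtain ⟨g, hg_int, hg⟩ := hint R (lt_max_of_lt_right one_pos)
  set u : ℝ → ℝ := fun t => ‖(X t - Y t)⁺‖
  have hu_ac : AbsolutelyContinuousOnInterval u 0 T := by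
    refine LipschitzOnWith.absolutelyContinuousOnInterval (K := 1 * (KX + KY)) ?_
    rw [uIcc_of_le hT.le]
    exact lipschitzWith_norm_posPart.comp_lipschitzOnWith (hKX.sub hKY)
  have hu_diff : ∀ᵐ t ∂volume.restrict (Icc 0 T), DifferentiableAt ℝ u t :=
    (ae_restrict_iff' measurableSet_Icc).2 <| by
      filter_upwards [hu_ac.ae_differentiableAt] with t ht ht' using ht (Icc_subset_uIcc ht')
  have hXR : ∀ t ∈ Icc 0 T, X t ∈ Metric.closedBall 0 R := fun t ht =>
    mem_closedBall_zero_iff.2 ((hCX t ht).trans (le_max_of_le_left (le_max_left _ _)))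
  have hYR : ∀ t ∈ Icc 0 T, Y t ∈ Metric.closedBall 0 R := fun t ht =>
    mem_closedBall_zero_iff.2 ((hCY t ht).trans (le_max_of_le_left (le_max_right _ _)))
  have hseg : ∀ t ∈ Icc 0 T, segment ℝ (Y t) (X t) ⊆ Metric.closedBall 0 R := fun t ht =>
    (convex_closedBall 0 R).segment_subset (hYR t ht) (hXR t ht)
  have hderiv : ∀ᵐ t ∂volume.restrict (Icc 0 T), deriv u t ≤ g t * u t := by
    filter_upwards [hdiff, hg, hoffdiag, hX, hY, hu_diff, ae_restrict_mem measurableSet_Icc]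
      with t hBt hgt hofft hXt hYt hut ht
    exact deriv_norm_posPart_sub_le hXt.1 hYt.1 hXt.2 hYt.2 hBt hofft
      (fun z hz => hgt z (mem_closedBall_zero_iff.1 (hseg t ht hz))) hut
  have hg_nonneg : 0 ≤ᵐ[volume.restrict (Icc 0 T)] g := by
    filter_upwards [hg] with t ht
    exact (norm_nonneg _).trans (ht 0 (by simp [R]))
  have hu_zero : EqOn u 0 (Icc 0 T) :=
    hu_ac.eqOn_zero_of_deriv_le_mul (fun _ _ => norm_nonneg _)
      (by simp [u, posPart_eq_zero.2 (sub_nonpos.2 hXY0)]) hg_int hg_nonneg hderiv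
  intro t ht i
  have hi := apply_le_norm_posPart (X t - Y t) i
  rw [show ‖(X t - Y t)⁺‖ = 0 from hu_zero ht] at hi
  simpa [sub_nonpos] using hi

/-- a comparison principle for ODEs driven by a velocity field `B` that is
quasimonotone (`∂_{x_i} B^j ≥ 0` for `i ≠ j`) and locally Lipschitz in space with
integrable-in-time local Lipschitz bounds.  If `X` is a Lipschitz subsolution and `Y` a
Lipschitz supersolution of `Z' = B(t, Z)` (coordinatewise, a.e. in time) with
`X(0) ≤ Y(0)`, then `X(t) ≤ Y(t)` coordinatewise for all `t ∈ [0,T]`. -/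
theorem stmt6 {d : ℕ} (T : ℝ) (hT : 0 < T)
    (B : ℝ → (Fin d → ℝ) → (Fin d → ℝ))
    (hmeas : Measurable (Function.uncurry B))
    (hdiff : ∀ᵐ t ∂volume.restrict (Set.Icc 0 T), Differentiable ℝ (B t))
    (hint : ∀ R : ℝ, 0 < R → ∃ g : ℝ → ℝ, IntegrableOn g (Set.Icc 0 T) ∧
      ∀ᵐ t ∂volume.restrict (Set.Icc 0 T), ∀ x : Fin d → ℝ, ‖x‖ ≤ R →
        ‖fderiv ℝ (B t) x‖ ≤ g t)
    (hoffdiag : ∀ᵐ t ∂volume.restrict (Set.Icc 0 T), ∀ x : Fin d → ℝ, ∀ i j : Fin d,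
      i ≠ j → 0 ≤ fderiv ℝ (B t) x (Pi.single i 1) j)
    (X Y X' Y' : ℝ → (Fin d → ℝ))
    (hX_lip : ∃ K : NNReal, LipschitzOnWith K X (Set.Icc 0 T))
    (hY_lip : ∃ K : NNReal, LipschitzOnWith K Y (Set.Icc 0 T))
    (hXY0 : X 0 ≤ Y 0)
    (hX : ∀ᵐ t ∂volume.restrict (Set.Icc 0 T), HasDerivAt X (X' t) t ∧ X' t ≤ B t (X t))
    (hY : ∀ᵐ t ∂volume.restrict (Set.Icc 0 T), HasDerivAt Y (Y' t) t ∧ B t (Y t) ≤ Y' t) :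
    ∀ t ∈ Set.Icc (0 : ℝ) T, X t ≤ Y t :=
  stmt6_general T hT B hdiff hint hoffdiag X Y X' Y' hX_lip hY_lip hXY0 hX hY
end

section
/- Let T > 0, let ρ : ℝ → ℝ be smooth, nonnegative, supported in [−1,1] with ∫ρ = 1, and for ε > 0 set ρ^ε(z) := ε^{−1} ρ((z + ε)/ε) and ρ_ε(z) := ε^{−1} ρ((z − ε)/ε). Let c : [0,T] → ℝ be Lipschitz with c(T) = 0 and −c'(t) ∈ [0,1] for a.e. t ∈ [0,T]. Define u_c(t,x) := 1 if x ≤ c(t) and u_c(t,x) := 0 otherwise, and set u_c^ε(t,x) := ∫_ℝ u_c(t,y) ρ^ε(x − y) dy and u_{c,ε}(t,x) := ∫_ℝ u_c(t,y) ρ_ε(x − y) dy. Then for every ε > 0, every t ∈ [0,T] at which c is differentiable with −c'(t) ∈ [0,1], and every x ∈ ℝ: −∂_t u_c^ε(t,x) + u_c(t,x) ∂_x u_c^ε(t,x) ≤ 0 and −∂_t u_{c,ε}(t,x) + u_c(t,x) ∂_x u_{c,ε}(t,x) ≥ 0. (Thus every such shock profile u_c, traveling with variable speed −c' ∈ [0,1],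 is a solution of the backward Burgers equation −∂_t u + u ∂_x u = 0 with terminal value 1{x ≤ 0}, in the one-sided mollification sense.) -/
open MeasureTheory Set

/-- The shock profile `u_c(t,x) = 1{x ≤ c(t)}`. -/
noncomputable def uc (c : ℝ → ℝ) (t x : ℝ) : ℝ := if x ≤ c t then 1 else 0

/-- One-sided mollification of `u_c(t,·)` with `ρ^ε(z) = ε⁻¹ ρ((z + ε)/ε)`. -/
noncomputable def ucUp (ρ : ℝ → ℝ) (c : ℝ → ℝ) (ε t x : ℝ) : ℝ :=
  ∫ y : ℝ, uc c t y * (ε⁻¹ * ρ ((x - y + ε) / ε))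

/-- One-sided mollification of `u_c(t,·)` with `ρ_ε(z) = ε⁻¹ ρ((z − ε)/ε)`. -/
noncomputable def ucDown (ρ : ℝ → ℝ) (c : ℝ → ℝ) (ε t x : ℝ) : ℝ :=
  ∫ y : ℝ, uc c t y * (ε⁻¹ * ρ ((x - y - ε) / ε))

/-- FTC for `b ↦ ∫_{[b,∞)} f`. -/
lemma ftcIci (f : ℝ → ℝ) (hf : Continuous f) (hfi : Integrable f) (a : ℝ) :
    HasDerivAt (fun b => ∫ u in Ici b, f u) (-(f a)) a := by
  have key : ∀ b : ℝ, (∫ u in Ici b, f u)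
      = (∫ u, f u) - ((∫ u in Iic (0:ℝ), f u) + ∫ u in (0:ℝ)..b, f u) := by
    intro b
    have h1 : (∫ u in Iic b, f u) + ∫ u in Ioi b, f u = ∫ u, f u := by
      simpa [compl_Iic] using integral_add_compl (measurableSet_Iic (a := b)) hfi
    have h2 : (∫ u in Iic b, f u) - ∫ u in Iic (0:ℝ), f u = ∫ u in (0:ℝ)..b, f u :=
      intervalIntegral.integral_Iic_sub_Iic hfi.integrableOn hfi.integrableOn
    rw [integral_Ici_eq_integral_Ioi]
    linarith
  have hd : HasDerivAt (fun b => ∫ u in (0:ℝ)..b, f u) (f a) a :=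
    intervalIntegral.integral_hasDerivAt_right hfi.intervalIntegrable
      (hf.stronglyMeasurableAtFilter _ _) hf.continuousAt
  have h3 : HasDerivAt
      (fun b => (∫ u, f u) - ((∫ u in Iic (0:ℝ), f u) + ∫ u in (0:ℝ)..b, f u))
      (-(f a)) a := by
    exact (hd.const_add _).const_sub _
  have hfun : (fun b => ∫ u in Ici b, f u)
      = fun b => (∫ u, f u) - ((∫ u in Iic (0:ℝ), f u) + ∫ u in (0:ℝ)..b, f u) :=
    funext key
  rw [hfun]
  exact h3

/-- Representation of the mollified shock as an integral over a half-line. -/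
lemma rep (f : ℝ → ℝ) (a x : ℝ) :
    (∫ y : ℝ, (if y ≤ a then (1:ℝ) else 0) * f (x - y)) = ∫ u in Ici (x - a), f u := by
  have h1 : ∀ y : ℝ, (if y ≤ a then (1:ℝ) else 0) * f (x - y)
      = (Ici (x - a)).indicator f (x - y) := by
    intro y
    by_cases h : y ≤ a
    · rw [if_pos h, one_mul, indicator_of_mem]
      exact mem_Ici.mpr (by linarith)
    · rw [if_neg h, zero_mul, indicator_of_notMem]
      simp only [mem_Ici, not_le]
      push_neg at h
      linarith
  calc (∫ y : ℝ, (if y ≤ a then (1:ℝ) else 0) * f (x - y))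
      = ∫ y : ℝ, (Ici (x - a)).indicator f (x - y) := by simp_rw [h1]
    _ = ∫ u : ℝ, (Ici (x - a)).indicator f u := integral_sub_left_eq_self _ volume x
    _ = ∫ u in Ici (x - a), f u := integral_indicator measurableSet_Ici

/-- Derivatives of the mollified shock. -/
lemma derivs (g : ℝ → ℝ) (hg : Continuous g) (hgi : Integrable g)
    (c : ℝ → ℝ) (t x : ℝ) (hdiff : DifferentiableAt ℝ c t) :
    deriv (fun τ => ∫ y : ℝ, uc c τ y * g (x - y)) t = g (x - c t) * deriv c t ∧
    deriv (fun z => ∫ y : ℝ, uc c t y * g (z - y)) x = -(g (x - c t)) := by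
  have hrep : ∀ τ z : ℝ, (∫ y : ℝ, uc c τ y * g (z - y)) = ∫ u in Ici (z - c τ), g u := by
    intro τ z
    simpa [uc] using rep g (c τ) z
  constructor
  · have h1 : HasDerivAt (fun τ => x - c τ) (-deriv c t) t := by
      exact hdiff.hasDerivAt.const_sub x
    have h2 : HasDerivAt (fun τ => ∫ u in Ici (x - c τ), g u)
        (-g (x - c t) * -deriv c t) t := by
        have := (ftcIci g hg hgi (x - c t)).comp t h1; exact this
    have h3 : (fun τ => ∫ y : ℝ, uc c τ y * g (x - y))
        = fun τ => ∫ u in Ici (x - c τ), g u := funext fun τ => hrep τ x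
    rw [h3, h2.deriv]; ring
  · have h1 : HasDerivAt (fun z => z - c t) 1 x := (hasDerivAt_id x).sub_const _
    have h2 : HasDerivAt (fun z => ∫ u in Ici (z - c t), g u)
        (-g (x - c t) * 1) x := by
        have := (ftcIci g hg hgi (x - c t)).comp x h1; exact this
    have h3 : (fun z => ∫ y : ℝ, uc c t y * g (z - y))
        = fun z => ∫ u in Ici (z - c t), g u := funext fun z => hrep t z
    rw [h3, h2.deriv]; ring

/-- every shock profile `u_c(t,x) = 1{x ≤ c(t)}`, with Lipschitz speed
function `c` satisfying `c(T) = 0` and `−c' ∈ [0,1]` a.e., is a solution of the backward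
Burgers equation `−∂_t u + u ∂_x u = 0` in the one-sided mollification sense: at every
time `t` where `c` is differentiable with `−c'(t) ∈ [0,1]` and every `x`,
`−∂_t u_c^ε + u_c ∂_x u_c^ε ≤ 0` and `−∂_t u_{c,ε} + u_c ∂_x u_{c,ε} ≥ 0`. -/
theorem stmt18 (T : ℝ) (hT : 0 < T)
    (ρ : ℝ → ℝ) (hρ_smooth : ContDiff ℝ (⊤ : ℕ∞) ρ) (hρ_nonneg : ∀ z, 0 ≤ ρ z)
    (hρ_supp : Function.support ρ ⊆ Set.Icc (-1 : ℝ) 1) (hρ_int : ∫ z : ℝ, ρ z = 1)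
    (c : ℝ → ℝ) (hc_lip : ∃ K : NNReal, LipschitzOnWith K c (Set.Icc 0 T))
    (hcT : c T = 0)
    (hc' : ∀ᵐ t ∂volume.restrict (Set.Icc (0:ℝ) T),
      DifferentiableAt ℝ c t ∧ deriv c t ∈ Set.Icc (-1 : ℝ) 0)
    (ε : ℝ) (hε : 0 < ε) (t : ℝ) (ht : t ∈ Set.Icc (0:ℝ) T)
    (hdiff : DifferentiableAt ℝ c t) (hct : deriv c t ∈ Set.Icc (-1 : ℝ) 0)
    (x : ℝ) :
    (-(deriv (fun τ => ucUp ρ c ε τ x) t)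
        + uc c t x * deriv (fun z => ucUp ρ c ε t z) x ≤ 0) ∧
    (0 ≤ -(deriv (fun τ => ucDown ρ c ε τ x) t)
        + uc c t x * deriv (fun z => ucDown ρ c ε t z) x) := by
  have hρc : Continuous ρ := hρ_smooth.continuous
  -- generic facts about the rescaled mollifiers
  have haux : ∀ b : ℝ, Continuous (fun w : ℝ => ε⁻¹ * ρ ((w + b) / ε))
      ∧ Integrable (fun w : ℝ => ε⁻¹ * ρ ((w + b) / ε)) := by
    intro b
    have hcont : Continuous (fun w : ℝ => ε⁻¹ * ρ ((w + b) / ε)) :=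
      continuous_const.mul (hρc.comp ((continuous_id.add continuous_const).div_const ε))
    refine ⟨hcont, hcont.integrable_of_hasCompactSupport ?_⟩
    apply HasCompactSupport.intro (isCompact_Icc (a := -ε - b) (b := ε - b))
    intro w hw
    by_contra h
    have hρne : ρ ((w + b) / ε) ≠ 0 := by
      intro h0
      exact h (by simp [h0])
    have hmem := hρ_supp hρne
    simp only [mem_Icc] at hmem
    have h1 : -ε ≤ w + b := by
      have := hmem.1
      rw [le_div_iff₀ hε] at this
      linarith
    have h2 : w + b ≤ ε := by
      have := hmem.2
      rw [div_le_one hε] at this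
      linarith
    exact hw (mem_Icc.mpr ⟨by linarith, by linarith⟩)
  -- ρ vanishes at -1 by continuity
  have hρm1 : ρ (-1) = 0 := by
    have h1 : Filter.Tendsto ρ (nhdsWithin (-1 : ℝ) (Iio (-1))) (nhds (ρ (-1))) :=
      (hρc.tendsto _).mono_left nhdsWithin_le_nhds
    have h2 : Filter.Tendsto ρ (nhdsWithin (-1 : ℝ) (Iio (-1))) (nhds 0) := by
      have heq : ∀ᶠ z in nhdsWithin (-1 : ℝ) (Iio (-1)), ρ z = (0:ℝ) := by
        filter_upwards [self_mem_nhdsWithin] with z hz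
        by_contra h
        exact absurd (hρ_supp h).1 (not_le.mpr hz)
      exact Filter.Tendsto.congr' (Filter.EventuallyEq.symm heq) tendsto_const_nhds
    exact tendsto_nhds_unique h1 h2
  set c' := deriv c t with hc'def
  have hc1 : -1 ≤ c' := hct.1
  have hc2 : c' ≤ 0 := hct.2
  constructor
  · -- ucUp case, mollifier g with shift b = ε
    set g : ℝ → ℝ := fun w => ε⁻¹ * ρ ((w + ε) / ε) with hgdef
    obtain ⟨hgc, hgi⟩ := haux ε
    have hd := derivs g hgc hgi c t x hdiff
    have e1 : deriv (fun τ => ucUp ρ c ε τ x) t = g (x - c t) * c' := by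
      have : (fun τ => ucUp ρ c ε τ x) = fun τ => ∫ y : ℝ, uc c τ y * g (x - y) := by
        funext τ
        simp only [ucUp, hgdef]
      rw [this]
      exact hd.1
    have e2 : deriv (fun z => ucUp ρ c ε t z) x = -(g (x - c t)) := by
      have : (fun z => ucUp ρ c ε t z) = fun z => ∫ y : ℝ, uc c t y * g (z - y) := by
        funext z
        simp only [ucUp, hgdef]
      rw [this]
      exact hd.2
    rw [e1, e2]
    by_cases hz : ρ ((x - c t + ε) / ε) = 0
    · have : g (x - c t) = 0 := by simp [hgdef, hz]
      simp [this]
    · -- on the support: x ≤ c t, so uc = 1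
      have hmem := hρ_supp hz
      simp only [mem_Icc] at hmem
      have hxle : x ≤ c t := by
        have := hmem.2
        rw [div_le_one hε] at this
        linarith
      have hu : uc c t x = 1 := by simp [uc, hxle]
      have hg0 : 0 ≤ g (x - c t) :=
        mul_nonneg (by positivity) (hρ_nonneg _)
      rw [hu]
      nlinarith [mul_nonneg hg0 (by linarith : (0:ℝ) ≤ c' + 1)]
  · -- ucDown case, mollifier g with shift b = -ε
    set g : ℝ → ℝ := fun w => ε⁻¹ * ρ ((w + -ε) / ε) with hgdef
    obtain ⟨hgc, hgi⟩ := haux (-ε)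
    have hd := derivs g hgc hgi c t x hdiff
    have e1 : deriv (fun τ => ucDown ρ c ε τ x) t = g (x - c t) * c' := by
      have : (fun τ => ucDown ρ c ε τ x) = fun τ => ∫ y : ℝ, uc c τ y * g (x - y) := by
        funext τ
        simp only [ucDown, hgdef, sub_eq_add_neg]
      rw [this]
      exact hd.1
    have e2 : deriv (fun z => ucDown ρ c ε t z) x = -(g (x - c t)) := by
      have : (fun z => ucDown ρ c ε t z) = fun z => ∫ y : ℝ, uc c t y * g (z - y) := by
        funext z
        simp only [ucDown, hgdef, sub_eq_add_neg]
      rw [this]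
      exact hd.2
    rw [e1, e2]
    by_cases hz : ρ ((x - c t + -ε) / ε) = 0
    · have : g (x - c t) = 0 := by simp [hgdef, hz]
      simp [this]
    · -- on the support: x > c t (using ρ(-1) = 0), so uc = 0
      have hmem := hρ_supp hz
      simp only [mem_Icc] at hmem
      have hne : (x - c t + -ε) / ε ≠ -1 := by
        intro h
        rw [h] at hz
        exact hz hρm1
      have hgt : c t < x := by
        have h1 : -1 ≤ (x - c t + -ε) / ε := hmem.1
        have h2 : -1 < (x - c t + -ε) / ε := lt_of_le_of_ne h1 (Ne.symm hne)
        rw [lt_div_iff₀ hε] at h2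
        linarith
      have hu : uc c t x = 0 := by simp [uc, not_le.mpr hgt]
      have hg0 : 0 ≤ g (x - c t) :=
        mul_nonneg (by positivity) (hρ_nonneg _)
      rw [hu]
      nlinarith [mul_nonneg hg0 (by linarith : (0:ℝ) ≤ -c')]
end

section
/- Define C : ℝ → ℝ by C(θ) := (θ e^θ − e^θ + 1) / (θ (e^θ − 1)) for θ ≠ 0 and C(0) := 1/2. Then C is continuous on ℝ, strictly increasing on ℝ, C(θ) → 0 as θ → −∞, and C(θ) → 1 as θ → +∞; consequently C is a bijection from ℝ onto the open interval (0,1). -/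
open Filter Topology Set

/-- The shock-speed selection map `C(θ) = (θe^θ − e^θ + 1)/(θ(e^θ − 1))`, extended by
continuity with `C(0) = 1/2`. -/
noncomputable def shockSpeed (θ : ℝ) : ℝ :=
  if θ = 0 then 1 / 2
  else (θ * Real.exp θ - Real.exp θ + 1) / (θ * (Real.exp θ - 1))

/-!
For `θ ≠ 0`, `C θ = 1 + (e^θ - 1)⁻¹ - θ⁻¹`, which gives the limits at `±∞` at once and
`C' θ = θ⁻² - e^θ / (e^θ - 1)²`. Since `e^θ - 1 = e^{θ/2} · 2 sinh (θ/2)`, positivity of `C'`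
reduces to `|t| < |sinh t|` for `t ≠ 0`. Near `0`,
`C θ = 1 - ((e^θ - 1 - θ) / θ²) / ((e^θ - 1) / θ) → 1 - (1/2) / 1` by l'Hôpital, so `C` is
continuous, and a continuous strictly increasing map with limits `0` and `1` is a bijection
onto `(0, 1)`.
-/

open Real

theorem StrictMono.bijOn_univ_Ioo_of_tendsto {α β : Type*} [LinearOrder α] [TopologicalSpace α]
    [PreconnectedSpace α] [Nonempty α] [NoMinOrder α] [NoMaxOrder α]
    [LinearOrder β] [TopologicalSpace β] [OrderTopology β] {f : α → β} {a b : β}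
    (hf : StrictMono f) (hc : Continuous f) (hbot : Tendsto f atBot (𝓝 a))
    (htop : Tendsto f atTop (𝓝 b)) : BijOn f univ (Ioo a b) := by
  refine ⟨fun x _ => ⟨?_, ?_⟩, hf.injective.injOn, fun y hy => ?_⟩
  · obtain ⟨x', hx'⟩ := exists_lt x
    exact (hf.monotone.le_of_tendsto hbot x').trans_lt (hf hx')
  · obtain ⟨x', hx'⟩ := exists_gt x
    exact (hf hx').trans_le (hf.monotone.ge_of_tendsto htop x')
  · obtain ⟨x₁, hx₁⟩ := (hbot.eventually (gt_mem_nhds hy.1)).exists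
    obtain ⟨x₂, hx₂⟩ := (htop.eventually (lt_mem_nhds hy.2)).exists
    obtain ⟨x, hx⟩ := mem_range_of_exists_le_of_exists_ge hc ⟨x₁, hx₁.le⟩ ⟨x₂, hx₂.le⟩
    exact ⟨x, trivial, hx⟩

theorem sq_lt_sinh_sq {t : ℝ} (ht : t ≠ 0) : t ^ 2 < sinh t ^ 2 := by
  rcases ht.lt_or_gt with ht | ht
  · have := sinh_lt_self_iff.mpr ht
    nlinarith
  · have := self_lt_sinh_iff.mpr ht
    nlinarith

theorem exp_sub_one_ne_zero {x : ℝ} (hx : x ≠ 0) : exp x - 1 ≠ 0 :=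
  sub_ne_zero.mpr (mt (exp_eq_one_iff x).mp hx)

theorem sq_mul_exp_lt_exp_sub_one_sq {x : ℝ} (hx : x ≠ 0) : x ^ 2 * exp x < (exp x - 1) ^ 2 := by
  have h : exp x - 1 = exp (x / 2) * (2 * sinh (x / 2)) := by
    rw [sinh_eq, mul_div_cancel₀ _ two_ne_zero, mul_sub, ← exp_add, ← exp_add, add_halves,
      add_neg_cancel, exp_zero]
  have hexp : exp x = exp (x / 2) ^ 2 := by rw [← exp_nat_mul]; ring_nf
  have hsinh := sq_lt_sinh_sq (div_ne_zero hx two_ne_zero)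
  rw [h, hexp]
  have := pow_pos (exp_pos (x / 2)) 2
  nlinarith

theorem tendsto_exp_sub_one_div_nhdsNE : Tendsto (fun x => (exp x - 1) / x) (𝓝[≠] 0) (𝓝 1) := by
  simpa [slope_fun_def_field] using hasDerivAt_iff_tendsto_slope.mp (hasDerivAt_exp 0)

theorem tendsto_exp_sub_one_sub_div_sq_nhdsNE :
    Tendsto (fun x => (exp x - 1 - x) / x ^ 2) (𝓝[≠] 0) (𝓝 (1 / 2)) := by
  have hf : ∀ x, HasDerivAt (fun x => exp x - 1 - x) (exp x - 1) x := fun x =>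
    ((hasDerivAt_exp x).sub_const 1).sub (hasDerivAt_id x)
  have hg : ∀ x : ℝ, HasDerivAt (fun x => x ^ 2) (2 * x) x := fun x => by
    simpa using hasDerivAt_pow 2 x
  have hzero {f : ℝ → ℝ} (hf : Continuous f) (h0 : f 0 = 0) : Tendsto f (𝓝[≠] 0) (𝓝 0) :=
    (hf.tendsto' 0 0 h0).mono_left nhdsWithin_le_nhds
  refine HasDerivAt.lhopital_zero_nhdsNE (.of_forall hf) (.of_forall hg) ?_
    (hzero (by fun_prop) (by simp)) (hzero (by fun_prop) (by simp)) ?_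
  · filter_upwards [self_mem_nhdsWithin] with x hx
    exact mul_ne_zero two_ne_zero hx
  · refine (tendsto_exp_sub_one_div_nhdsNE.div_const 2).congr fun x => ?_
    rw [div_div, mul_comm]

theorem shockSpeed_zero : shockSpeed 0 = 1 / 2 := if_pos rfl

theorem shockSpeed_of_ne_zero {θ : ℝ} (hθ : θ ≠ 0) :
    shockSpeed θ = 1 + (exp θ - 1)⁻¹ - θ⁻¹ := by
  have := exp_sub_one_ne_zero hθ
  rw [shockSpeed, if_neg hθ]
  field_simp
  ring

theorem hasDerivAt_shockSpeed {θ : ℝ} (hθ : θ ≠ 0) :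
    HasDerivAt shockSpeed ((θ ^ 2)⁻¹ - exp θ / (exp θ - 1) ^ 2) θ := by
  have h := ((hasDerivAt_const θ (1 : ℝ)).add
    (((hasDerivAt_exp θ).sub_const 1).inv (exp_sub_one_ne_zero hθ))).sub (hasDerivAt_inv hθ)
  refine (h.congr_of_eventuallyEq ?_).congr_deriv (by ring)
  filter_upwards [isOpen_ne.mem_nhds hθ] with x hx using shockSpeed_of_ne_zero hx

theorem exp_div_exp_sub_one_sq_lt_inv_sq {θ : ℝ} (hθ : θ ≠ 0) :
    exp θ / (exp θ - 1) ^ 2 < (θ ^ 2)⁻¹ := by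
  rw [div_lt_iff₀ (sq_pos_of_ne_zero (exp_sub_one_ne_zero hθ)), inv_mul_eq_div,
    lt_div_iff₀ (sq_pos_of_ne_zero hθ), mul_comm]
  exact sq_mul_exp_lt_exp_sub_one_sq hθ

theorem tendsto_shockSpeed_nhdsNE_zero : Tendsto shockSpeed (𝓝[≠] 0) (𝓝 (1 / 2)) := by
  have h := tendsto_const_nhds (x := (1 : ℝ)).sub
    (tendsto_exp_sub_one_sub_div_sq_nhdsNE.div tendsto_exp_sub_one_div_nhdsNE one_ne_zero)
  norm_num at h
  refine h.congr' ?_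
  filter_upwards [self_mem_nhdsWithin] with θ (hθ : θ ≠ 0)
  have := exp_sub_one_ne_zero hθ
  rw [shockSpeed_of_ne_zero hθ]
  field_simp
  ring

theorem continuous_shockSpeed : Continuous shockSpeed := by
  refine continuous_iff_continuousAt.2 fun θ => ?_
  rcases eq_or_ne θ 0 with rfl | hθ
  · rw [← continuousWithinAt_compl_self, ContinuousWithinAt, shockSpeed_zero]
    exact tendsto_shockSpeed_nhdsNE_zero
  · exact (hasDerivAt_shockSpeed hθ).continuousAt

theorem strictMono_shockSpeed : StrictMono shockSpeed := by
  have hmono {D : Set ℝ} (hD : Convex ℝ D) (h0 : 0 ∉ interior D) : StrictMonoOn shockSpeed D :=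
    strictMonoOn_of_hasDerivWithinAt_pos hD continuous_shockSpeed.continuousOn
      (fun _ hx => (hasDerivAt_shockSpeed (ne_of_mem_of_not_mem hx h0)).hasDerivWithinAt)
      (fun _ hx => sub_pos.2 (exp_div_exp_sub_one_sq_lt_inv_sq (ne_of_mem_of_not_mem hx h0)))
  exact (hmono (convex_Iic 0) (by simp)).Iic_union_Ici (hmono (convex_Ici 0) (by simp))

theorem tendsto_shockSpeed_atTop : Tendsto shockSpeed atTop (𝓝 1) := by
  have h := (tendsto_const_nhds (x := (1 : ℝ)).add (tendsto_inv_atTop_zero.comp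
    (tendsto_atTop_add_const_right _ (-1) tendsto_exp_atTop))).sub tendsto_inv_atTop_zero
  norm_num at h
  refine h.congr' ?_
  filter_upwards [eventually_gt_atTop 0] with θ hθ
  rw [shockSpeed_of_ne_zero hθ.ne']
  ring

theorem tendsto_shockSpeed_atBot : Tendsto shockSpeed atBot (𝓝 0) := by
  have h := (tendsto_const_nhds (x := (1 : ℝ)).add
    ((tendsto_exp_atBot.sub_const 1).inv₀ (by norm_num))).sub tendsto_inv_atBot_zero
  norm_num at h
  refine h.congr' ?_
  filter_upwards [eventually_lt_atBot 0] with θ hθ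
  rw [shockSpeed_of_ne_zero hθ.ne]

/-- the shock-speed selection map `C` is continuous, strictly increasing,
tends to `0` at `−∞` and to `1` at `+∞`, and is a bijection from `ℝ` onto `(0,1)`. -/
theorem stmt19 :
    Continuous shockSpeed ∧
    StrictMono shockSpeed ∧
    Filter.Tendsto shockSpeed Filter.atBot (𝓝 0) ∧
    Filter.Tendsto shockSpeed Filter.atTop (𝓝 1) ∧
    Set.BijOn shockSpeed Set.univ (Set.Ioo (0 : ℝ) 1) :=
  ⟨continuous_shockSpeed, strictMono_shockSpeed, tendsto_shockSpeed_atBot, tendsto_shockSpeed_atTop,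
    strictMono_shockSpeed.bijOn_univ_Ioo_of_tendsto continuous_shockSpeed tendsto_shockSpeed_atBot
      tendsto_shockSpeed_atTop⟩
end
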